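/- arXiv:1609.08122 — 9 statements merged into one kernel-verified Lean document; each statement's English description precedes it below -/
import Mathlib

section
/- Let A be a finite commutative group and b : A × A → ℂˣ a nondegenerate alternating bilinear pairing. Then (A, b) admits a Lagrangian decomposition: there exist Lagrangian subgroups J and K of A such that A is the internal direct product of J and K (J ∩ K = {1} and J·K = A) and the map sending k ∈ K to the character j ↦ b(k, j) of J is a group isomorphism from K onto the character group Hom(J, ℂˣ). -/
/-- A subgroup `J` of a commutative group `A` is *Lagrangian* for a pairing
`b : A × A → ℂˣ` if `J` equals its own annihilator:
`J = {a ∈ A : b(a, j) = 1 for all j ∈ J}`. -/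
def IsLagrangian {A : Type*} [CommGroup A] (b : A → A → ℂˣ) (J : Subgroup A) : Prop :=
  ∀ a : A, a ∈ J ↔ ∀ j ∈ J, b a j = 1

/-- `(J, K)` is a *Lagrangian decomposition* of `(A, b)` : both `J` and `K` are Lagrangian,
`A` is the internal direct product of `J` and `K`, and the map sending `k ∈ K` to the
character `j ↦ b(k, j)` of `J` is a bijection of `K` onto the character group
`Hom(J, ℂˣ)` (by bilinearity of `b` this bijection is automatically a group isomorphism). -/
def IsLagrangianDecomp {A : Type*} [CommGroup A] (b : A → A → ℂˣ) (J K : Subgroup A) : Prop :=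
  IsLagrangian b J ∧ IsLagrangian b K ∧
  J ⊓ K = ⊥ ∧ (∀ a : A, ∃ j ∈ J, ∃ k ∈ K, a = j * k) ∧
  Function.Injective (fun k : K => fun j : J => b (k : A) (j : A)) ∧
  (∀ φ : ↥J →* ℂˣ, ∃ k : K, ∀ j : J, b (k : A) (j : A) = φ j)


/-! Choose `a` of maximal order `n` and `c` with `b(a, c)` a primitive `n`-th root of unity. Every
value of `b` is then a power of `b(a, c)`, so `A = ⟨a⟩ ⊔ ⟨c⟩ ⊔ P` with `P` the orthogonal of
`{a, c}`, and `b` stays nondegenerate on `P`. By induction on `|A|` we get isotropic `J, K` with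
`J ⊔ K = A`, adjoining `a` and `c` to the pair obtained for `P`. Such a pair is a Lagrangian
decomposition: nondegeneracy makes `K → Ĵ` and `J → K̂` injective, and `|Ĵ| = |J|`, `|K̂| = |K|`
force both to be bijective. -/

open Subgroup Function

section Orthogonality

variable {A M : Type*} [CommGroup A] [CommGroup M]

def IsOrtho (B : A →* A →* M) (H L : Subgroup A) : Prop :=
  ∀ x ∈ H, ∀ y ∈ L, B x y = 1

def IsIsotropic (B : A →* A →* M) (J : Subgroup A) : Prop :=
  IsOrtho B J J

def restrictPairing (B : A →* A →* M) (K J : Subgroup A) : K →* J →* M :=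
  (B.comp K.subtype).compl₂ J.subtype

variable {B : A →* A →* M} {H L J K : Subgroup A}

theorem pairing_swap_eq_inv (halt : ∀ x, B x x = 1) (x y : A) : B y x = (B x y)⁻¹ := by
  have h := halt (x * y)
  simp only [map_mul, MonoidHom.mul_apply, halt, one_mul, mul_one] at h
  exact eq_inv_of_mul_eq_one_left h

theorem IsOrtho.symm (halt : ∀ x, B x x = 1) (h : IsOrtho B H L) : IsOrtho B L H :=
  fun y hy x hx => by rw [pairing_swap_eq_inv halt, h x hx y hy, inv_one]

theorem IsOrtho.mono {H' L' : Subgroup A} (h : IsOrtho B H L) (hH : H' ≤ H) (hL : L' ≤ L) :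
    IsOrtho B H' L' :=
  fun x hx y hy => h x (hH hx) y (hL hy)

theorem IsOrtho.sup_left {H' : Subgroup A} (h : IsOrtho B H L) (h' : IsOrtho B H' L) :
    IsOrtho B (H ⊔ H') L := by
  intro x hx y hy
  obtain ⟨x₁, hx₁, x₂, hx₂, rfl⟩ := mem_sup.mp hx
  rw [map_mul, MonoidHom.mul_apply, h x₁ hx₁ y hy, h' x₂ hx₂ y hy, one_mul]

theorem IsOrtho.sup_right {L' : Subgroup A} (h : IsOrtho B H L) (h' : IsOrtho B H L') :
    IsOrtho B H (L ⊔ L') := by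
  intro x hx y hy
  obtain ⟨y₁, hy₁, y₂, hy₂, rfl⟩ := mem_sup.mp hy
  rw [map_mul, h x hx y₁ hy₁, h' x hx y₂ hy₂, one_mul]

theorem isOrtho_zpowers_right {a : A} (h : ∀ x ∈ H, B x a = 1) : IsOrtho B H (zpowers a) := by
  rintro x hx _ ⟨k, rfl⟩
  rw [map_zpow, h x hx, one_zpow]

theorem isIsotropic_zpowers (halt : ∀ x, B x x = 1) (a : A) : IsIsotropic B (zpowers a) :=
  isOrtho_zpowers_right fun x hx => by
    obtain ⟨k, rfl⟩ := mem_zpowers_iff.mp hx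
    rw [map_zpow, MonoidHom.zpow_apply, halt, one_zpow]

theorem IsIsotropic.sup (halt : ∀ x, B x x = 1) (hJ : IsIsotropic B J) (hK : IsIsotropic B K)
    (hJK : IsOrtho B J K) : IsIsotropic B (J ⊔ K) :=
  (IsOrtho.sup_right hJ hJK).sup_left (IsOrtho.sup_right (hJK.symm halt) hK)

theorem IsIsotropic.map_subtype {P : Subgroup A} {J : Subgroup P}
    (hJ : IsIsotropic (restrictPairing B P P) J) : IsIsotropic B (J.map P.subtype) := by
  rintro _ ⟨x, hx, rfl⟩ _ ⟨y, hy, rfl⟩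
  exact hJ x hx y hy

theorem eq_one_of_le_ker_of_sup_eq_top (hB : Injective B) (hHL : H ⊔ L = ⊤) {x : A}
    (hH : H ≤ (B x).ker) (hL : L ≤ (B x).ker) : x = 1 :=
  hB <| by rw [map_one, ← MonoidHom.ker_eq_top_iff, eq_top_iff, ← hHL]; exact sup_le hH hL

theorem injective_restrictPairing (hB : Injective B) (hKL : IsOrtho B K L) (hJL : J ⊔ L = ⊤) :
    Injective (restrictPairing B K J) := by
  refine (injective_iff_map_eq_one _).mpr fun k hk => Subtype.ext ?_
  exact eq_one_of_le_ker_of_sup_eq_top hB hJL (fun y hy => DFunLike.congr_fun hk ⟨y, hy⟩ :)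
    (fun y hy => hKL k k.2 y hy)

theorem zpowers_sup_zpowers_sup_ker_eq_top (halt : ∀ x, B x x = 1) {a c : A}
    (hac : ∀ x y, B x y ∈ zpowers (B a c)) :
    zpowers a ⊔ zpowers c ⊔ ((B.flip a).ker ⊓ (B.flip c).ker) = ⊤ := by
  refine eq_top_iff.mpr fun x _ => ?_
  obtain ⟨i, hi⟩ := mem_zpowers_iff.mp (hac x c)
  obtain ⟨j, hj⟩ := mem_zpowers_iff.mp (hac x a)
  set g := a ^ i * c ^ (-j)
  have hp : g⁻¹ * x ∈ (B.flip a).ker ⊓ (B.flip c).ker := by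
    simp only [g, mem_inf, MonoidHom.mem_ker, MonoidHom.flip_apply, map_mul, map_inv, map_zpow,
      halt, pairing_swap_eq_inv halt c a, ← hi, ← hj]
    constructor <;> group
  rw [← mul_inv_cancel_left g x]
  exact mul_mem (mul_mem (mem_sup_left (mem_sup_left (zpow_mem_zpowers a i)))
    (mem_sup_left (mem_sup_right (zpow_mem_zpowers c _)))) (mem_sup_right hp)

end Orthogonality

section Complex

variable {A : Type*} [CommGroup A] {B : A →* A →* ℂˣ} {J K : Subgroup A}

theorem isLagrangian_of_isIsotropic (hB : Injective B) (hJ : IsIsotropic B J)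
    (hK : IsIsotropic B K) (hJK : J ⊔ K = ⊤) : IsLagrangian (fun x y => B x y) J := by
  refine fun x => ⟨fun hx => hJ x hx, fun hx => ?_⟩
  obtain ⟨j, hj, k, hk, rfl⟩ := mem_sup.mp (hJK ▸ mem_top x)
  have hkJ : J ≤ (B k).ker := fun y hy => by
    have : B (j * k) y = 1 := hx y hy
    rwa [map_mul, MonoidHom.mul_apply, hJ j hj y hy, one_mul] at this
  rw [eq_one_of_le_ker_of_sup_eq_top hB hJK hkJ (fun y hy => hK k hk y hy), mul_one]
  exact hj

theorem bijective_restrictPairing [Finite A] (hB : Injective B) (hJ : IsIsotropic B J)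
    (hK : IsIsotropic B K) (hJK : J ⊔ K = ⊤) : Bijective (restrictPairing B K J) := by
  have card_dual (L : Subgroup A) : Nat.card (L →* ℂˣ) = Nat.card L :=
    CommGroup.card_monoidHom_of_hasEnoughRootsOfUnity L ℂ
  have : Finite (J →* ℂˣ) := Nat.finite_of_card_ne_zero (by rw [card_dual]; exact Nat.card_pos.ne')
  refine (injective_restrictPairing hB hK hJK).bijective_of_nat_card_le ?_
  calc Nat.card (J →* ℂˣ) = Nat.card J := card_dual J
    _ ≤ Nat.card (K →* ℂˣ) :=
      Nat.card_le_card_of_injective _ (injective_restrictPairing hB hJ (sup_comm J K ▸ hJK))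
    _ = Nat.card K := card_dual K

theorem isLagrangianDecomp_of_isIsotropic [Finite A] (hB : Injective B) (hJ : IsIsotropic B J)
    (hK : IsIsotropic B K) (hJK : J ⊔ K = ⊤) : IsLagrangianDecomp (fun x y => B x y) J K := by
  have hbij := bijective_restrictPairing hB hJ hK hJK
  refine ⟨isLagrangian_of_isIsotropic hB hJ hK hJK,
    isLagrangian_of_isIsotropic hB hK hJ (sup_comm J K ▸ hJK), ?_, fun a => ?_,
    fun k₁ k₂ h => hbij.1 (MonoidHom.ext (congrFun h)), fun φ => ?_⟩
  · refine (eq_bot_iff_forall _).mpr fun x hx => ?_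
    exact eq_one_of_le_ker_of_sup_eq_top hB hJK (fun y hy => hJ x hx.1 y hy)
      (fun y hy => hK x hx.2 y hy)
  · obtain ⟨j, hj, k, hk, hjk⟩ := mem_sup.mp (hJK ▸ mem_top a)
    exact ⟨j, hj, k, hk, hjk.symm⟩
  · obtain ⟨k, hk⟩ := hbij.2 φ
    exact ⟨k, DFunLike.congr_fun hk⟩

/- `b(a, ·)` has order `orderOf a` by nondegeneracy, and so has a generator `b(a, c)` of its
cyclic image. -/
theorem exists_isPrimitiveRoot_pairing [Finite A] (hB : Injective B) :
    ∃ a c : A, IsPrimitiveRoot (B a c) (Monoid.exponent A) := by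
  obtain ⟨a, ha⟩ := Monoid.exists_orderOf_eq_exponent (Monoid.ExponentExists.of_finite (G := A))
  have : Finite (B a).range := Finite.of_surjective _ (B a).rangeRestrict_surjective
  obtain ⟨⟨_, c, rfl⟩, hc⟩ := IsCyclic.exists_generator (α := (B a).range)
  refine ⟨a, c, ha ▸ ?_⟩
  suffices orderOf (B a c) = orderOf a from this ▸ IsPrimitiveRoot.orderOf _
  refine Nat.dvd_antisymm (orderOf_dvd_of_pow_eq_one ?_) (orderOf_dvd_of_pow_eq_one (hB ?_))
  · rw [← MonoidHom.pow_apply, ← map_pow, pow_orderOf_eq_one, map_one, MonoidHom.one_apply]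
  · have hcard : orderOf (B a c) = Nat.card (B a).range := by
      rw [← orderOf_eq_card_of_forall_mem_zpowers hc]
      exact (Subgroup.orderOf_mk (H := (B a).range) _ _).symm
    refine MonoidHom.ext fun y => ?_
    rw [map_pow, map_one, MonoidHom.pow_apply, MonoidHom.one_apply, hcard]
    exact congrArg (fun u : (B a).range => (u : ℂˣ)) (pow_card_eq_one' (x := ⟨B a y, y, rfl⟩))

theorem pairing_mem_zpowers_of_isPrimitiveRoot [Finite A] {a c : A}
    (hζ : IsPrimitiveRoot (B a c) (Monoid.exponent A)) (x y : A) : B x y ∈ zpowers (B a c) := by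
  have : NeZero (Monoid.exponent A) := ⟨Monoid.exponent_ne_zero_of_finite⟩
  rw [hζ.zpowers_eq, mem_rootsOfUnity, ← MonoidHom.pow_apply, ← map_pow,
    Monoid.pow_exponent_eq_one, map_one, MonoidHom.one_apply]

theorem exists_isIsotropic_sup_eq_top [Finite A] (halt : ∀ x, B x x = 1) (hB : Injective B) :
    ∃ J K : Subgroup A, IsIsotropic B J ∧ IsIsotropic B K ∧ J ⊔ K = ⊤ := by
  induction hN : Nat.card A using Nat.strong_induction_on generalizing A with
  | _ N ih =>
  rcases subsingleton_or_nontrivial A with hA | hA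
  · have hbot : IsIsotropic B ⊥ := fun x hx _ _ => by
      rw [mem_bot.mp hx, map_one, MonoidHom.one_apply]
    exact ⟨⊥, ⊥, hbot, hbot, Subsingleton.elim _ _⟩
  obtain ⟨a, c, hζ⟩ := exists_isPrimitiveRoot_pairing hB
  set P := (B.flip a).ker ⊓ (B.flip c).ker
  have hcover := zpowers_sup_zpowers_sup_ker_eq_top halt (pairing_mem_zpowers_of_isPrimitiveRoot hζ)
  have hPac : IsOrtho B P (zpowers a ⊔ zpowers c) :=
    (isOrtho_zpowers_right fun x hx => (mem_inf.mp hx).1).sup_right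
      (isOrtho_zpowers_right fun x hx => (mem_inf.mp hx).2)
  have hcard : Nat.card P < N := hN ▸ Finite.card_subtype_lt (p := (· ∈ P)) fun ha : a ∈ P =>
    hζ.ne_one Monoid.one_lt_exponent (mem_inf.mp ha).2
  have hBP : Injective (restrictPairing B P P) :=
    injective_restrictPairing hB hPac ((sup_comm _ _).trans hcover)
  obtain ⟨J, K, hJ, hK, hJK⟩ := ih _ hcard (B := restrictPairing B P P) (fun x => halt x) hBP rfl
  have hJKP : J.map P.subtype ⊔ K.map P.subtype = P := by
    rw [← Subgroup.map_sup, hJK, ← MonoidHom.range_eq_map, range_subtype]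
  refine ⟨zpowers a ⊔ J.map P.subtype, zpowers c ⊔ K.map P.subtype,
    (isIsotropic_zpowers halt a).sup halt hJ.map_subtype ?_,
    (isIsotropic_zpowers halt c).sup halt hK.map_subtype ?_, ?_⟩
  · exact (hPac.symm halt).mono le_sup_left (map_subtype_le J)
  · exact (hPac.symm halt).mono le_sup_right (map_subtype_le K)
  · rw [sup_sup_sup_comm, hJKP, hcover]

end Complex

/-- Existence part of Lemma 3.1: a finite commutative group with a nondegenerate
alternating bilinear pairing admits a Lagrangian decomposition. -/
theorem lagrangian_decomposition_exists
    {A : Type*} [CommGroup A] [Finite A] (b : A → A → ℂˣ)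
    (hbil₁ : ∀ x y z : A, b (x * y) z = b x z * b y z)
    (hbil₂ : ∀ x y z : A, b x (y * z) = b x y * b x z)
    (halt : ∀ x : A, b x x = 1)
    (hnd : ∀ x : A, (∀ y : A, b x y = 1) → x = 1) :
    ∃ J K : Subgroup A, IsLagrangianDecomp b J K := by
  let B : A →* A →* ℂˣ :=
    MonoidHom.mk' (fun x => MonoidHom.mk' (b x) (hbil₂ x)) fun x y => MonoidHom.ext (hbil₁ x y)
  have hB : Injective B := (injective_iff_map_eq_one B).mpr fun x hx =>
    hnd x fun y => DFunLike.congr_fun hx y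
  obtain ⟨J, K, hJ, hK, hJK⟩ := exists_isIsotropic_sup_eq_top (B := B) halt hB
  exact ⟨J, K, isLagrangianDecomp_of_isIsotropic hB hJ hK hJK⟩
end

section
/- Let A be a finite commutative group, b : A × A → ℂˣ a nondegenerate alternating bilinear pairing, and let (J, K) and (J', K') be two Lagrangian decompositions of (A, b). Then there exists a group automorphism θ of A preserving b (that is, b(θ(x), θ(y)) = b(x, y) for all x, y ∈ A) such that θ(J) = J' and θ(K) = K'. -/
namespace LagAux

/-! ### Torsion counting -/

noncomputable def tcard (G : Type*) [Monoid G] (d : ℕ) : ℕ := Nat.card {x : G // x ^ d = 1}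

noncomputable def tcardA (G : Type*) [AddMonoid G] (d : ℕ) : ℕ := Nat.card {x : G // d • x = 0}

lemma tcard_congr {G H : Type*} [Monoid G] [Monoid H] (e : G ≃* H) (d : ℕ) :
    tcard G d = tcard H d := by
  refine Nat.card_congr (Equiv.subtypeEquiv e.toEquiv fun x => ?_)
  rw [show e.toEquiv x = e x from rfl, ← map_pow, EmbeddingLike.map_eq_one_iff]

lemma tcardA_congr {G H : Type*} [AddMonoid G] [AddMonoid H] (e : G ≃+ H) (d : ℕ) :
    tcardA G d = tcardA H d := by
  refine Nat.card_congr (Equiv.subtypeEquiv e.toEquiv fun x => ?_)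
  rw [show e.toEquiv x = e x from rfl, ← map_nsmul, EmbeddingLike.map_eq_zero_iff]

lemma tcard_prod (G H : Type*) [Monoid G] [Monoid H] (d : ℕ) :
    tcard (G × H) d = tcard G d * tcard H d := by
  rw [tcard, tcard, tcard, ← Nat.card_prod]
  refine Nat.card_congr ?_
  refine (Equiv.subtypeEquivRight fun p => ?_).trans (Equiv.subtypeProdEquivProd)
  rw [Prod.ext_iff]; simp

lemma tcardA_pi {ι : Type*} [Fintype ι] (M : ι → Type*) [∀ i, AddMonoid (M i)] (d : ℕ) :
    tcardA (∀ i, M i) d = ∏ i, tcardA (M i) d := by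
  simp only [tcardA]
  rw [← Nat.card_pi]
  refine Nat.card_congr ((Equiv.subtypeEquivRight fun x => ?_).trans (Equiv.subtypePiEquivPi))
  simp [funext_iff]

lemma tcard_eq_tcardA (G : Type*) [Monoid G] (d : ℕ) : tcard G d = tcardA (Additive G) d := by
  refine Nat.card_congr (Equiv.subtypeEquiv Additive.ofMul fun x => ?_)
  rw [← ofMul_pow]
  constructor
  · intro hx; rw [hx]; rfl
  · intro hx; exact hx

lemma tcardA_zmod (n : ℕ) (hn : n ≠ 0) (d : ℕ) : tcardA (ZMod n) d = Nat.gcd n d := by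
  haveI : NeZero n := ⟨hn⟩
  set f : ZMod n →+ ZMod n := AddMonoidHom.mulLeft (d : ZMod n) with hf
  have hker : ∀ x : ZMod n, d • x = 0 ↔ x ∈ f.ker := by
    intro x
    rw [AddMonoidHom.mem_ker, hf, AddMonoidHom.coe_mulLeft, nsmul_eq_mul]
  have h1 : tcardA (ZMod n) d = Nat.card f.ker := Nat.card_congr (Equiv.subtypeEquivRight hker)
  have hrange : f.range = AddSubgroup.zmultiples ((d : ZMod n)) := by
    ext x
    rw [AddMonoidHom.mem_range, AddSubgroup.mem_zmultiples_iff]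
    constructor
    · rintro ⟨y, rfl⟩
      refine ⟨(y.val : ℤ), ?_⟩
      rw [zsmul_eq_mul, Int.cast_natCast, ZMod.natCast_val, ZMod.cast_id, hf,
        AddMonoidHom.coe_mulLeft, mul_comm]
    · rintro ⟨k, rfl⟩
      refine ⟨((k : ℤ) : ZMod n), ?_⟩
      rw [hf, AddMonoidHom.coe_mulLeft, zsmul_eq_mul, mul_comm]
  have h2 : Nat.card (ZMod n ⧸ f.ker) = Nat.card f.range :=
    Nat.card_congr (QuotientAddGroup.quotientKerEquivRange f).toEquiv
  have h3 : Nat.card f.range = n / n.gcd d := by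
    rw [hrange, Nat.card_zmultiples, ZMod.addOrderOf_coe d hn]
  have h4 : n = (n / n.gcd d) * Nat.card f.ker := by
    conv_lhs => rw [← Nat.card_zmod n]
    rw [AddSubgroup.card_eq_card_quotient_mul_card_addSubgroup f.ker, h2, h3]
  have hg : n.gcd d ∣ n := Nat.gcd_dvd_left n d
  have hgpos : 0 < n.gcd d := Nat.gcd_pos_of_pos_left d (Nat.pos_of_ne_zero hn)
  have hpos : 0 < n / n.gcd d := Nat.div_pos (Nat.le_of_dvd (Nat.pos_of_ne_zero hn) hg) hgpos
  have h5 : n = (n / n.gcd d) * n.gcd d := (Nat.div_mul_cancel hg).symm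
  rw [h1]
  exact Nat.eq_of_mul_eq_mul_left hpos (h4.symm.trans h5)


/-! ### Combinatorics of prime powers -/

lemma gcd_pp (P : ℕ) (a b : ℕ) : Nat.gcd (P ^ a) (P ^ b) = P ^ min a b := by
  rcases le_total a b with h | h
  · rw [Nat.gcd_eq_left (pow_dvd_pow P h), min_eq_left h]
  · rw [Nat.gcd_eq_right (pow_dvd_pow P h), min_eq_right h]

lemma prodGcd {α : Type} [Fintype α] (r s : α → ℕ) (hr : ∀ a, (r a).Prime)
    (P : ℕ) (hP : P.Prime) (t : ℕ) :
    ∏ a, Nat.gcd (r a ^ s a) (P ^ t)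
      = P ^ ∑ a ∈ Finset.univ.filter (fun a => r a = P), min (s a) t := by
  classical
  rw [← Finset.prod_filter_mul_prod_filter_not Finset.univ (fun a => r a = P)
    (fun a => Nat.gcd (r a ^ s a) (P ^ t))]
  have h2 : ∏ a ∈ Finset.univ.filter (fun a => ¬ r a = P), Nat.gcd (r a ^ s a) (P ^ t) = 1 := by
    refine Finset.prod_eq_one fun a ha => ?_
    have hne : r a ≠ P := (Finset.mem_filter.mp ha).2
    exact Nat.Coprime.pow _ _ ((Nat.coprime_primes (hr a) hP).mpr hne)
  rw [h2, mul_one,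
    Finset.prod_congr rfl (fun a ha => by rw [(Finset.mem_filter.mp ha).2, gcd_pp]),
    Finset.prod_pow_eq_pow_sum]

lemma sum_min_succ {α : Type} [Fintype α] (r s : α → ℕ) (P t : ℕ) :
    ∑ a ∈ Finset.univ.filter (fun a => r a = P), min (s a) (t + 1)
      = (∑ a ∈ Finset.univ.filter (fun a => r a = P), min (s a) t)
        + (Finset.univ.filter (fun a => r a = P ∧ t + 1 ≤ s a)).card := by
  classical
  rw [← Finset.filter_filter, Finset.card_filter, ← Finset.sum_add_distrib]
  exact Finset.sum_congr rfl fun a _ => by split <;> omega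

lemma card_split {α : Type} [Fintype α] (r s : α → ℕ) (P E : ℕ) :
    (Finset.univ.filter (fun a => r a = P ∧ E + 1 ≤ s a)).card
      = (Finset.univ.filter (fun a => r a = P ∧ s a = E + 1)).card
        + (Finset.univ.filter (fun a => r a = P ∧ E + 2 ≤ s a)).card := by
  classical
  rw [Finset.card_filter, Finset.card_filter, Finset.card_filter, ← Finset.sum_add_distrib]
  refine Finset.sum_congr rfl fun a _ => ?_
  by_cases h1 : r a = P
  · by_cases h2 : s a = E + 1 <;> by_cases h3 : E + 2 ≤ s a <;>
      simp [h1, h2, h3] <;> omega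
  · simp [h1]

lemma pp_unique {P pp E ee : ℕ} (hP : P.Prime) (hp : pp.Prime) (hee : ee ≠ 0)
    (h : pp ^ ee = P ^ (E + 1)) : pp = P ∧ ee = E + 1 := by
  have hd : pp ∣ P ^ (E + 1) := h ▸ dvd_pow_self pp hee
  have hdvd : pp ∣ P := Nat.Prime.dvd_of_dvd_pow hp hd
  have heq : pp = P := (Nat.prime_dvd_prime_iff_eq hp hP).mp hdvd
  subst heq
  exact ⟨rfl, Nat.pow_right_injective hp.two_le h⟩

lemma exists_equiv_of_gcd_prod_eq {ι κ : Type} [Fintype ι] [Fintype κ]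
    (p e : ι → ℕ) (q f : κ → ℕ)
    (hp : ∀ i, (p i).Prime) (hq : ∀ j, (q j).Prime)
    (he : ∀ i, e i ≠ 0) (hf : ∀ j, f j ≠ 0)
    (H : ∀ d, ∏ i, Nat.gcd (p i ^ e i) d = ∏ j, Nat.gcd (q j ^ f j) d) :
    ∃ σ : ι ≃ κ, ∀ i, q (σ i) ^ f (σ i) = p i ^ e i := by
  classical
  have hS : ∀ P, P.Prime → ∀ t,
      (∑ i ∈ Finset.univ.filter (fun i => p i = P), min (e i) t)
        = ∑ j ∈ Finset.univ.filter (fun j => q j = P), min (f j) t := by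
    intro P hP t
    refine Nat.pow_right_injective hP.two_le ?_
    show P ^ _ = P ^ _
    rw [← prodGcd p e hp P hP t, ← prodGcd q f hq P hP t, H]
  have hc : ∀ P, P.Prime → ∀ t,
      (Finset.univ.filter (fun i => p i = P ∧ t + 1 ≤ e i)).card
        = (Finset.univ.filter (fun j => q j = P ∧ t + 1 ≤ f j)).card := by
    intro P hP t
    have h1 := hS P hP t
    have h2 := hS P hP (t + 1)
    rw [sum_min_succ p e P t, sum_min_succ q f P t] at h2
    omega
  have hN : ∀ P, P.Prime → ∀ E,
      (Finset.univ.filter (fun i => p i = P ∧ e i = E + 1)).card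
        = (Finset.univ.filter (fun j => q j = P ∧ f j = E + 1)).card := by
    intro P hP E
    have h1 := hc P hP E
    have h2 := hc P hP (E + 1)
    simp only [show E + 1 + 1 = E + 2 from rfl] at h2
    rw [card_split p e P E, card_split q f P E] at h1
    omega
  have hfib : ∀ v, (Finset.univ.filter (fun i => p i ^ e i = v)).card
      = (Finset.univ.filter (fun j => q j ^ f j = v)).card := by
    intro v
    by_cases hv : ∃ P E, P.Prime ∧ v = P ^ (E + 1)
    · obtain ⟨P, E, hP, rfl⟩ := hv
      have hfil1 : Finset.univ.filter (fun i => p i ^ e i = P ^ (E + 1))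
          = Finset.univ.filter (fun i => p i = P ∧ e i = E + 1) := by
        refine Finset.filter_congr fun i _ => ?_
        constructor
        · intro hh; exact pp_unique hP (hp i) (he i) hh
        · rintro ⟨h1, h2⟩; rw [h1, h2]
      have hfil2 : Finset.univ.filter (fun j => q j ^ f j = P ^ (E + 1))
          = Finset.univ.filter (fun j => q j = P ∧ f j = E + 1) := by
        refine Finset.filter_congr fun j _ => ?_
        constructor
        · intro hh; exact pp_unique hP (hq j) (hf j) hh
        · rintro ⟨h1, h2⟩; rw [h1, h2]
      rw [hfil1, hfil2]
      exact hN P hP E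
    · have h1 : Finset.univ.filter (fun i => p i ^ e i = v) = ∅ :=
        Finset.filter_eq_empty_iff.mpr (fun i _ hi => hv ⟨p i, e i - 1, hp i,
          by have h9 : e i - 1 + 1 = e i := by have := he i; omega
             rw [h9]; exact hi.symm⟩)
      have h2 : Finset.univ.filter (fun j => q j ^ f j = v) = ∅ :=
        Finset.filter_eq_empty_iff.mpr (fun j _ hj => hv ⟨q j, f j - 1, hq j,
          by have h9 : f j - 1 + 1 = f j := by have := hf j; omega
             rw [h9]; exact hj.symm⟩)
      rw [h1, h2]; rfl
  have hfib' : ∀ v, Fintype.card {i // p i ^ e i = v} = Fintype.card {j // q j ^ f j = v} := by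
    intro v
    rw [Fintype.card_subtype, Fintype.card_subtype]
    exact hfib v
  exact ⟨Equiv.ofFiberEquiv (f := fun i => p i ^ e i) (g := fun j => q j ^ f j)
    (fun v => Fintype.equivOfCardEq (hfib' v)),
    fun i => Equiv.ofFiberEquiv_map (f := fun i => p i ^ e i) (g := fun j => q j ^ f j)
      (fun v => Fintype.equivOfCardEq (hfib' v)) i⟩

/-! ### Classification -/

def piSubtype {ι : Type} (M : ι → Type*) [∀ i, AddCommMonoid (M i)]
    (pred : ι → Prop) [DecidablePred pred]
    (hsub : ∀ i, ¬ pred i → ∀ x : M i, x = 0) :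
    (∀ i, M i) ≃+ (∀ i : {i // pred i}, M i) where
  toFun x i := x i
  invFun y i := if h : pred i then y ⟨i, h⟩ else 0
  left_inv x := by
    funext i
    by_cases h : pred i
    · simp [h]
    · simp only [h, dif_neg, not_false_iff]
      exact (hsub i h (x i)).symm
  right_inv y := by
    funext i
    simp [i.2]
  map_add' x y := rfl

def addPiCongrLeft {ι κ : Type} (σ : ι ≃ κ) (g : κ → ℕ) :
    (∀ j, ZMod (g j)) ≃+ ∀ i, ZMod (g (σ i)) :=
  { (Equiv.piCongrLeft' (fun j => ZMod (g j)) σ.symm :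
      (∀ j, ZMod (g j)) ≃ ∀ i, ZMod (g (σ.symm.symm i))) with
    map_add' := fun _ _ => rfl }

lemma mulEquiv_of_tcard_eq (G H : Type*) [CommGroup G] [CommGroup H] [Finite G] [Finite H]
    (hGH : ∀ d, tcard G d = tcard H d) : Nonempty (G ≃* H) := by
  classical
  obtain ⟨ι, fι, p, hp, e, ⟨E⟩⟩ := AddCommGroup.equiv_directSum_zmod_of_finite (Additive G)
  obtain ⟨κ, fκ, q, hq, f, ⟨F⟩⟩ := AddCommGroup.equiv_directSum_zmod_of_finite (Additive H)
  have hsubG : ∀ i, ¬ e i ≠ 0 → ∀ x : ZMod (p i ^ e i), x = 0 := by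
    intro i hi x
    have h1 : p i ^ e i = 1 := by rw [not_not.mp hi, pow_zero]
    haveI : Subsingleton (ZMod (p i ^ e i)) := by rw [h1]; infer_instance
    exact Subsingleton.elim x 0
  have hsubH : ∀ j, ¬ f j ≠ 0 → ∀ x : ZMod (q j ^ f j), x = 0 := by
    intro j hj x
    have h1 : q j ^ f j = 1 := by rw [not_not.mp hj, pow_zero]
    haveI : Subsingleton (ZMod (q j ^ f j)) := by rw [h1]; infer_instance
    exact Subsingleton.elim x 0
  let eG : Additive G ≃+ ∀ i : {i // e i ≠ 0}, ZMod (p i ^ e i) :=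
    E.trans ((DirectSum.addEquivProd _).trans (piSubtype _ _ hsubG))
  let eH : Additive H ≃+ ∀ j : {j // f j ≠ 0}, ZMod (q j ^ f j) :=
    F.trans ((DirectSum.addEquivProd _).trans (piSubtype _ _ hsubH))
  have key : ∀ d, ∏ i : {i // e i ≠ 0}, Nat.gcd (p i ^ e i) d
      = ∏ j : {j // f j ≠ 0}, Nat.gcd (q j ^ f j) d := by
    intro d
    have h1 : tcard G d = ∏ i : {i // e i ≠ 0}, Nat.gcd (p i ^ e i) d := by
      rw [tcard_eq_tcardA, tcardA_congr eG, tcardA_pi]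
      exact Finset.prod_congr rfl fun i _ =>
        tcardA_zmod _ (pow_ne_zero _ (hp i.1).pos.ne') d
    have h2 : tcard H d = ∏ j : {j // f j ≠ 0}, Nat.gcd (q j ^ f j) d := by
      rw [tcard_eq_tcardA, tcardA_congr eH, tcardA_pi]
      exact Finset.prod_congr rfl fun j _ =>
        tcardA_zmod _ (pow_ne_zero _ (hq j.1).pos.ne') d
    rw [← h1, ← h2, hGH d]
  obtain ⟨σ, hσ⟩ := exists_equiv_of_gcd_prod_eq (fun i : {i // e i ≠ 0} => p i.1)
    (fun i => e i.1) (fun j : {j // f j ≠ 0} => q j.1) (fun j => f j.1)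
    (fun i => hp i.1) (fun j => hq j.1) (fun i => i.2) (fun j => j.2) key
  let mid : (∀ i : {i // e i ≠ 0}, ZMod (p i.1 ^ e i.1)) ≃+
      (∀ j : {j // f j ≠ 0}, ZMod (q j.1 ^ f j.1)) :=
    (AddEquiv.piCongrRight fun i => (ZMod.ringEquivCongr (hσ i).symm).toAddEquiv).trans
      (addPiCongrLeft σ (fun j => q j.1 ^ f j.1)).symm
  exact ⟨MulEquiv.toAdditive.symm (eG.trans (mid.trans eH.symm))⟩


section Main

variable {A : Type*} [CommGroup A] [Finite A] (b : A → A → ℂˣ)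

/-- The product map of a decomposition, as a `MulEquiv`. -/
noncomputable def decompEquiv (J K : Subgroup A) (hJK : J ⊓ K = ⊥)
    (hgen : ∀ a : A, ∃ j ∈ J, ∃ k ∈ K, a = j * k) : (↥J × ↥K) ≃* A := by
  refine MulEquiv.ofBijective ((J.subtype).coprod (K.subtype)) ⟨?_, ?_⟩
  · rintro ⟨j1, k1⟩ ⟨j2, k2⟩ hEq
    simp only [MonoidHom.coprod_apply, Subgroup.coe_subtype] at hEq
    have h5 : ((j1 : A) / j2) = (k2 : A) / k1 := by
      rw [div_eq_div_iff_mul_eq_mul, hEq, mul_comm]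
    have hxJ : ((j1 : A) / j2) ∈ J := J.div_mem j1.2 j2.2
    have hxK : ((j1 : A) / j2) ∈ K := by rw [h5]; exact K.div_mem k2.2 k1.2
    have hx1 : ((j1 : A) / j2) = 1 := by
      have := (Subgroup.mem_inf.mpr ⟨hxJ, hxK⟩ : (j1 : A) / j2 ∈ J ⊓ K)
      rw [hJK, Subgroup.mem_bot] at this
      exact this
    have hj : j1 = j2 := Subtype.ext (div_eq_one.mp hx1)
    have hk : k1 = k2 := by
      refine Subtype.ext ?_
      have := hEq
      rw [hj] at this
      exact mul_left_cancel this
    rw [hj, hk]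
  · intro a
    obtain ⟨j, hj, k, hk, rfl⟩ := hgen a
    exact ⟨(⟨j, hj⟩, ⟨k, hk⟩), rfl⟩

lemma decompEquiv_apply (J K : Subgroup A) (hJK : J ⊓ K = ⊥)
    (hgen : ∀ a : A, ∃ j ∈ J, ∃ k ∈ K, a = j * k) (j : ↥J) (k : ↥K) :
    decompEquiv J K hJK hgen (j, k) = (j : A) * k := rfl

end Main


end LagAux

open LagAux in
/-- Transitivity part of Lemma 3.1: the group of pairing-preserving automorphisms acts
transitively on Lagrangian decompositions: given two Lagrangian decompositions
`(J, K)` and `(J', K')` of `(A, b)` there is an automorphism `θ` of `A` preserving `b`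
with `θ(J) = J'` and `θ(K) = K'`. -/
theorem lagrangian_decompositions_conjugate
    {A : Type*} [CommGroup A] [Finite A] (b : A → A → ℂˣ)
    (hbil₁ : ∀ x y z : A, b (x * y) z = b x z * b y z)
    (hbil₂ : ∀ x y z : A, b x (y * z) = b x y * b x z)
    (halt : ∀ x : A, b x x = 1)
    (hnd : ∀ x : A, (∀ y : A, b x y = 1) → x = 1)
    (J K J' K' : Subgroup A)
    (h : IsLagrangianDecomp b J K) (h' : IsLagrangianDecomp b J' K') :
    ∃ θ : A ≃* A, (∀ x y : A, b (θ x) (θ y) = b x y) ∧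
      J.map θ.toMonoidHom = J' ∧ K.map θ.toMonoidHom = K' := by
  classical
  obtain ⟨hJL, hKL, hJK, hgen, hinj, hsurj⟩ := h
  obtain ⟨hJL', hKL', hJK', hgen', hinj', hsurj'⟩ := h'
  -- basic pairing facts
  have hb1 : ∀ x : A, b 1 x = 1 := by
    intro x
    have h0 := hbil₁ 1 1 x
    rw [one_mul] at h0
    exact mul_left_cancel (h0.symm.trans (mul_one (b 1 x)).symm)
  have hb1' : ∀ x : A, b x 1 = 1 := by
    intro x
    have h0 := hbil₂ x 1 1
    rw [one_mul] at h0
    exact mul_left_cancel (h0.symm.trans (mul_one (b x 1)).symm)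
  have hskew : ∀ x y : A, b x y = (b y x)⁻¹ := by
    intro x y
    have h0 := halt (x * y)
    rw [hbil₁, hbil₂, hbil₂, halt x, halt y, one_mul, mul_one] at h0
    exact eq_inv_of_mul_eq_one_left h0
  -- injectivity restated
  have hinjK : ∀ k1 k2 : ↥K, (∀ j : ↥J, b ↑k1 ↑j = b ↑k2 ↑j) → k1 = k2 :=
    fun k1 k2 hk => hinj (funext hk)
  have hinjK' : ∀ k1 k2 : ↥K', (∀ j : ↥J', b ↑k1 ↑j = b ↑k2 ↑j) → k1 = k2 :=
    fun k1 k2 hk => hinj' (funext hk)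
  -- characters as monoid homs
  let chi : ↥K → (↥J →* ℂˣ) := fun k =>
    { toFun := fun j => b ↑k ↑j
      map_one' := by show b ↑k ↑(1 : ↥J) = 1; rw [OneMemClass.coe_one]; exact hb1' _
      map_mul' := fun j1 j2 => hbil₂ _ _ _ }
  let chi' : ↥K' → (↥J' →* ℂˣ) := fun k =>
    { toFun := fun j => b ↑k ↑j
      map_one' := by show b ↑k ↑(1 : ↥J') = 1; rw [OneMemClass.coe_one]; exact hb1' _
      map_mul' := fun j1 j2 => hbil₂ _ _ _ }
  let Phi : ↥K →* (↥J →* ℂˣ) := MonoidHom.mk' chi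
    (fun k1 k2 => MonoidHom.ext fun j => hbil₁ _ _ _)
  have hPhiBij : Function.Bijective Phi := by
    constructor
    · intro k1 k2 hEq
      exact hinjK k1 k2 fun j => DFunLike.congr_fun hEq j
    · intro φ
      obtain ⟨k, hk⟩ := hsurj φ
      exact ⟨k, MonoidHom.ext fun j => hk j⟩
  let eKJ : ↥K ≃* (↥J →* ℂˣ) := MulEquiv.ofBijective Phi hPhiBij
  -- duals
  haveI hne1 : NeZero ((Monoid.exponent ↥J : ℕ) : ℂ) :=
    ⟨Nat.cast_ne_zero.mpr Monoid.exponent_ne_zero_of_finite⟩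
  haveI hne2 : NeZero ((Monoid.exponent ↥J' : ℕ) : ℂ) :=
    ⟨Nat.cast_ne_zero.mpr Monoid.exponent_ne_zero_of_finite⟩
  obtain ⟨dJ⟩ := CommGroup.monoidHom_mulEquiv_of_hasEnoughRootsOfUnity ↥J ℂ
  obtain ⟨dJ'⟩ := CommGroup.monoidHom_mulEquiv_of_hasEnoughRootsOfUnity ↥J' ℂ
  -- the analogous data for the primed decomposition
  let Phi' : ↥K' →* (↥J' →* ℂˣ) := MonoidHom.mk' chi'
    (fun k1 k2 => MonoidHom.ext fun j => hbil₁ _ _ _)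
  have hPhiBij' : Function.Bijective Phi' := by
    constructor
    · intro k1 k2 hEq
      exact hinjK' k1 k2 fun j => DFunLike.congr_fun hEq j
    · intro φ
      obtain ⟨k, hk⟩ := hsurj' φ
      exact ⟨k, MonoidHom.ext fun j => hk j⟩
  let eKJ' : ↥K' ≃* (↥J' →* ℂˣ) := MulEquiv.ofBijective Phi' hPhiBij'
  -- torsion card equalities
  let eJK : (↥J × ↥K) ≃* A := decompEquiv J K hJK hgen
  let eJK' : (↥J' × ↥K') ≃* A := decompEquiv J' K' hJK' hgen'
  have htJJ' : ∀ d, tcard ↥J d = tcard ↥J' d := by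
    intro d
    have h1 : tcard A d = tcard ↥J d * tcard ↥J d := by
      rw [tcard_congr eJK.symm d, tcard_prod,
        tcard_congr (eKJ.trans dJ) d]
    have h2 : tcard A d = tcard ↥J' d * tcard ↥J' d := by
      rw [tcard_congr eJK'.symm d, tcard_prod,
        tcard_congr (eKJ'.trans dJ') d]
    have h3 : tcard ↥J d ^ 2 = tcard ↥J' d ^ 2 := by
      rw [pow_two, pow_two, ← h1, ← h2]
    exact Nat.pow_left_injective (by norm_num) h3
  obtain ⟨φ⟩ := mulEquiv_of_tcard_eq ↥J ↥J' htJJ'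
  -- construct ψ : K ≃* K'
  have hchoose : ∀ k : ↥K, ∃ k' : ↥K', ∀ j' : ↥J', b ↑k' ↑j' = b ↑k ↑(φ.symm j') := by
    intro k
    obtain ⟨k', hk'⟩ := hsurj' ((chi k).comp φ.symm.toMonoidHom)
    exact ⟨k', fun j' => hk' j'⟩
  choose ψf hψf using hchoose
  have hψmul : ∀ k1 k2, ψf (k1 * k2) = ψf k1 * ψf k2 := by
    intro k1 k2
    refine hinjK' _ _ fun j' => ?_
    rw [hψf]
    rw [show ((k1 * k2 : ↥K) : A) = (k1 : A) * k2 from rfl, hbil₁,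
      ← hψf k1 j', ← hψf k2 j',
      show ((ψf k1 * ψf k2 : ↥K') : A) = (ψf k1 : A) * (ψf k2 : A) from rfl, hbil₁]
  let ψm : ↥K →* ↥K' := MonoidHom.mk' ψf hψmul
  have hψinj : Function.Injective ψm := by
    refine (injective_iff_map_eq_one ψm).mpr fun k hk => ?_
    have hji : ∀ j : ↥J, b ↑k ↑j = 1 := by
      intro j
      have h7 := hψf k (φ j)
      rw [show ψm k = ψf k from rfl] at hk
      rw [hk, OneMemClass.coe_one, φ.symm_apply_apply] at h7
      rw [← h7]
      exact hb1 _
    have hkk : ∀ c ∈ K, b ↑k c = 1 := (hKL ↑k).mp k.2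
    have hall : ∀ y, b ↑k y = 1 := by
      intro y
      obtain ⟨jy, hjy, ky, hky, rfl⟩ := hgen y
      rw [hbil₂, hji ⟨jy, hjy⟩, hkk ky hky, one_mul]
    exact Subtype.ext (hnd _ hall)
  have hψsurj : Function.Surjective ψm := by
    intro k'
    obtain ⟨k, hk⟩ := hsurj ((chi' k').comp φ.toMonoidHom)
    refine ⟨k, hinjK' _ _ fun j' => ?_⟩
    show b ↑(ψf k) ↑j' = b ↑k' ↑j'
    rw [hψf k j', hk (φ.symm j')]
    show b ↑k' ↑(φ (φ.symm j')) = b ↑k' ↑j'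
    rw [φ.apply_symm_apply]
  let ψ : ↥K ≃* ↥K' := MulEquiv.ofBijective ψm ⟨hψinj, hψsurj⟩
  -- the automorphism
  let θ : A ≃* A := eJK.symm.trans ((φ.prodCongr ψ).trans eJK')
  have hθ : ∀ (j : ↥J) (k : ↥K), θ ((j : A) * k) = (φ j : A) * (ψf k : A) := by
    intro j k
    have h0 : ((j : A) * k) = eJK (j, k) := rfl
    show eJK' ((φ.prodCongr ψ) (eJK.symm ((j : A) * k))) = _
    rw [h0, eJK.symm_apply_apply]
    rfl
  refine ⟨θ, ?_, ?_, ?_⟩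
  · -- pairing preservation
    have key : ∀ (j k1 : ↥J) (k : ↥K) (j2 : ↥J) (k2 : ↥K), True := fun _ _ _ _ _ => trivial
    clear key
    have key : ∀ (j : ↥J) (k : ↥K) (j2 : ↥J) (k2 : ↥K),
        b (θ ((j : A) * k)) (θ ((j2 : A) * k2)) = b ((j : A) * k) ((j2 : A) * k2) := by
      intro j k j2 k2
      rw [hθ, hθ]
      simp only [hbil₁, hbil₂]
      have e1 : b ↑(φ j) ↑(φ j2) = 1 := (hJL' ↑(φ j)).mp (φ j).2 ↑(φ j2) (φ j2).2
      have e2 : b (j : A) ↑j2 = 1 := (hJL (j : A)).mp j.2 ↑j2 j2.2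
      have e3 : b ↑(ψf k) ↑(ψf k2) = 1 := (hKL' ↑(ψf k)).mp (ψf k).2 ↑(ψf k2) (ψf k2).2
      have e4 : b (k : A) ↑k2 = 1 := (hKL (k : A)).mp k.2 ↑k2 k2.2
      have e5 : b ↑(ψf k) ↑(φ j2) = b (k : A) ↑j2 := by
        rw [hψf k (φ j2), φ.symm_apply_apply]
      have e6 : b ↑(φ j) ↑(ψf k2) = b (j : A) ↑k2 := by
        have h7 : b ↑(ψf k2) ↑(φ j) = b (k2 : A) ↑j := by
          rw [hψf k2 (φ j), φ.symm_apply_apply]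
        rw [hskew ↑(φ j) ↑(ψf k2), h7, hskew (j : A) ↑k2]
      rw [e1, e2, e3, e4, e5, e6]
    intro x y
    obtain ⟨jx, hjx, kx, hkx, rfl⟩ := hgen x
    obtain ⟨jy, hjy, ky, hky, rfl⟩ := hgen y
    exact key ⟨jx, hjx⟩ ⟨kx, hkx⟩ ⟨jy, hjy⟩ ⟨ky, hky⟩
  · -- J maps to J'
    have hψf1 : ψf 1 = 1 := ψm.map_one
    apply le_antisymm
    · intro a ha
      obtain ⟨x, hx, rfl⟩ := Subgroup.mem_map.mp ha
      have h8 := hθ ⟨x, hx⟩ 1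
      rw [hψf1, OneMemClass.coe_one, OneMemClass.coe_one, mul_one, mul_one] at h8
      show θ x ∈ J'
      rw [show θ.toMonoidHom x = θ x from rfl] at *
      rw [h8]
      exact (φ ⟨x, hx⟩).2
    · intro a ha
      refine Subgroup.mem_map.mpr ⟨↑(φ.symm ⟨a, ha⟩), (φ.symm ⟨a, ha⟩).2, ?_⟩
      have h8 := hθ (φ.symm ⟨a, ha⟩) 1
      rw [hψf1, OneMemClass.coe_one, OneMemClass.coe_one, mul_one, mul_one,
        φ.apply_symm_apply] at h8
      exact h8
  · -- K maps to K'
    have hφ1 : φ 1 = 1 := map_one φ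
    apply le_antisymm
    · intro a ha
      obtain ⟨x, hx, rfl⟩ := Subgroup.mem_map.mp ha
      have h8 := hθ 1 ⟨x, hx⟩
      rw [hφ1, OneMemClass.coe_one, OneMemClass.coe_one, one_mul, one_mul] at h8
      show θ x ∈ K'
      rw [h8]
      exact (ψf ⟨x, hx⟩).2
    · intro a ha
      refine Subgroup.mem_map.mpr ⟨↑(ψ.symm ⟨a, ha⟩), (ψ.symm ⟨a, ha⟩).2, ?_⟩
      have h8 := hθ 1 (ψ.symm ⟨a, ha⟩)
      rw [hφ1, OneMemClass.coe_one, OneMemClass.coe_one, one_mul, one_mul] at h8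
      have h9 : ψf (ψ.symm ⟨a, ha⟩) = ⟨a, ha⟩ := ψ.apply_symm_apply ⟨a, ha⟩
      rw [h9] at h8
      exact h8
end

section
/- Let m > 1 be an integer, d = m², and ζ ∈ ℂ a primitive d-th root of unity. Let A = (ℤ/dℤ) × (ℤ/dℤ) and define b : A × A → ℂˣ by b((a₁,a₂),(c₁,c₂)) = ζ^(a₁c₂ − a₂c₁) (the exponent computed from arbitrary integer lifts; this is well defined since ζ^d = 1). Then b is a nondegenerate alternating bilinear pairing, the subgroup L = m·A = {(m·a₁, m·a₂) : a₁, a₂ ∈ ℤ/dℤ} is a Lagrangian subgroup of (A, b), but there is NO subgroup K of A such that (L, K) is a Lagrangian decomposition of (A, b). -/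
/-- Additive version: a subgroup `J` of an additive commutative group `A` is *Lagrangian*
for a pairing `b : A × A → ℂˣ` if `J` equals its own annihilator. -/
def IsLagrangianAdd {A : Type*} [AddCommGroup A] (b : A → A → ℂˣ) (J : AddSubgroup A) : Prop :=
  ∀ a : A, a ∈ J ↔ ∀ j ∈ J, b a j = 1

/-- Additive version: `(J, K)` is a *Lagrangian decomposition* of `(A, b)` : both are
Lagrangian, `A` is the internal direct product (sum) of `J` and `K`, and `k ↦ (j ↦ b(k, j))`
is a bijection of `K` onto the character group of `J` (automatically a group isomorphism
by bilinearity). -/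
def IsLagrangianDecompAdd {A : Type*} [AddCommGroup A] (b : A → A → ℂˣ)
    (J K : AddSubgroup A) : Prop :=
  IsLagrangianAdd b J ∧ IsLagrangianAdd b K ∧
  J ⊓ K = ⊥ ∧ (∀ a : A, ∃ j ∈ J, ∃ k ∈ K, a = j + k) ∧
  Function.Injective (fun k : K => fun j : J => b (k : A) (j : A)) ∧
  (∀ φ : AddChar ↥J ℂˣ, ∃ k : K, ∀ j : J, b (k : A) (j : A) = φ j)

/-- If `ζ^d = 1` then `ζ^a` only depends on `a` modulo `d`. -/
lemma zpow_eq_zpow_of_zmod_eq {d : ℕ} (ζ : ℂˣ) (h1 : ζ ^ (d : ℤ) = 1) {a b : ℤ}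
    (h : (a : ZMod d) = (b : ZMod d)) : ζ ^ a = ζ ^ b := by
  have h2 : ((b - a : ℤ) : ZMod d) = 0 := by push_cast; rw [h]; ring
  rw [ZMod.intCast_zmod_eq_zero_iff_dvd] at h2
  obtain ⟨c, hc⟩ := h2
  have hb : b = a + d * c := by linarith
  rw [hb, zpow_add, zpow_mul, h1, one_zpow, mul_one]

/-- In `ZMod (m^2)`, if `m ∣ x.val` then `x` is a multiple of `m`. -/
lemma exists_smul_of_dvd_val {m : ℕ} (hm : 0 < m) {x : ZMod (m ^ 2)} (h : m ∣ x.val) :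
    ∃ c : ZMod (m ^ 2), x = m • c := by
  obtain ⟨t, ht⟩ := h
  refine ⟨(t : ZMod (m ^ 2)), ?_⟩
  have : NeZero (m ^ 2) := ⟨by positivity⟩
  have hx : (x.val : ZMod (m ^ 2)) = x := by rw [ZMod.natCast_val, ZMod.cast_id]
  rw [← hx, ht, nsmul_eq_mul]
  push_cast
  ring

/-- The Remark following Lemma 3.1: for `d = m²` (`m > 1`), `ζ` a primitive `d`-th root of
unity, `A = ℤ/d × ℤ/d` with the pairing `b((a₁,a₂),(c₁,c₂)) = ζ^(a₁c₂ − a₂c₁)`, the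
pairing `b` is a nondegenerate alternating bilinear pairing, the subgroup `L = m·A` is a
Lagrangian subgroup, but no subgroup `K` makes `(L, K)` a Lagrangian decomposition. -/
theorem lagrangian_subgroup_without_decomposition
    (m : ℕ) (hm : 1 < m) (ζ : ℂˣ) (hζ : IsPrimitiveRoot (ζ : ℂ) (m ^ 2)) :
    let d := m ^ 2
    let b : ZMod d × ZMod d → ZMod d × ZMod d → ℂˣ := fun a c =>
      ζ ^ ((a.1.val : ℤ) * (c.2.val : ℤ) - (a.2.val : ℤ) * (c.1.val : ℤ))
    let L : AddSubgroup (ZMod d × ZMod d) :=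
      AddMonoidHom.range
        (AddMonoidHom.mk' (fun x : ZMod d × ZMod d => m • x) (fun x y => smul_add m x y))
    (∀ x y z, b (x + y) z = b x z * b y z) ∧
    (∀ x y z, b x (y + z) = b x y * b x z) ∧
    (∀ x, b x x = 1) ∧
    (∀ x, (∀ y, b x y = 1) → x = 0) ∧
    IsLagrangianAdd b L ∧
    ¬ ∃ K : AddSubgroup (ZMod d × ZMod d), IsLagrangianDecompAdd b L K := by
  intro d b L
  have hd1 : 1 < d := by
    have := Nat.one_lt_pow (n := 2) (by norm_num) hm
    simpa [d] using this
  have hd0 : (d : ℕ) ≠ 0 := by omega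
  have : NeZero d := ⟨hd0⟩
  have hmd : m < d := by
    have : m < m ^ 2 := by nlinarith
    simpa [d] using this
  have hζ' : IsPrimitiveRoot ζ d := IsPrimitiveRoot.coe_units_iff.mp hζ
  have h1 : ζ ^ (d : ℤ) = 1 := hζ'.zpow_eq_one
  -- tool to prove equalities of values of b by computing in ZMod d
  have key : ∀ a c : ℤ, (a : ZMod d) = (c : ZMod d) → ζ ^ a = ζ ^ c :=
    fun a c h => zpow_eq_zpow_of_zmod_eq ζ h1 h
  have hval : ∀ x : ZMod d, ((x.val : ℤ) : ZMod d) = x := by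
    intro x
    push_cast
    rw [ZMod.natCast_val, ZMod.cast_id]
  -- bilinearity in first variable
  have hb1 : ∀ x y z, b (x + y) z = b x z * b y z := by
    intro x y z
    simp only [b, ← zpow_add]
    apply key
    push_cast [hval]
    have : ((x + y).1 : ZMod d) = x.1 + y.1 := rfl
    ring_nf
    rw [show (x + y).1 = x.1 + y.1 from rfl, show (x + y).2 = x.2 + y.2 from rfl]
    ring
  have hb2 : ∀ x y z, b x (y + z) = b x y * b x z := by
    intro x y z
    simp only [b, ← zpow_add]
    apply key
    push_cast [hval]
    rw [show (y + z).1 = y.1 + z.1 from rfl, show (y + z).2 = y.2 + z.2 from rfl]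
    ring
  have halt : ∀ x, b x x = 1 := by
    intro x
    simp only [b]
    rw [mul_comm ((x.2.val : ℤ)) ((x.1.val : ℤ)), sub_self, zpow_zero]
  -- nondegeneracy
  have hval_one : (1 : ZMod d).val = 1 := ZMod.val_one_eq_one_mod d ▸ Nat.mod_eq_of_lt hd1
  have hnd : ∀ x, (∀ y, b x y = 1) → x = 0 := by
    intro x hx
    have h01 := hx ((0 : ZMod d), (1 : ZMod d))
    have h10 := hx ((1 : ZMod d), (0 : ZMod d))
    simp only [b, ZMod.val_zero, hval_one] at h01 h10
    push_cast at h01 h10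
    rw [mul_one, mul_zero, sub_zero] at h01
    rw [mul_zero, mul_one, zero_sub] at h10
    rw [hζ'.zpow_eq_one_iff_dvd] at h01
    rw [hζ'.zpow_eq_one_iff_dvd, dvd_neg] at h10
    have hx1 : x.1.val = 0 :=
      Nat.eq_zero_of_dvd_of_lt (Int.natCast_dvd_natCast.mp h01) (ZMod.val_lt x.1)
    have hx2 : x.2.val = 0 :=
      Nat.eq_zero_of_dvd_of_lt (Int.natCast_dvd_natCast.mp h10) (ZMod.val_lt x.2)
    have : x.1 = 0 := by simpa [ZMod.val_eq_zero] using hx1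
    have h2 : x.2 = 0 := by simpa [ZMod.val_eq_zero] using hx2
    exact Prod.ext this h2
  -- membership in L
  have hmemL : ∀ a, a ∈ L ↔ ∃ x : ZMod d × ZMod d, m • x = a := by
    intro a
    simp [L, AddMonoidHom.mem_range, AddMonoidHom.mk'_apply]
  have hmval : ((m : ZMod d)).val = m := ZMod.val_natCast_of_lt hmd
  -- divisibility extraction: if d ∣ m * v then m ∣ v
  have hdvd : ∀ v : ℕ, d ∣ m * v → m ∣ v := by
    intro v ⟨c, hc⟩
    refine ⟨c, ?_⟩
    have hd2 : d = m * m := by simp [d, pow_two]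
    rw [hd2, mul_assoc] at hc
    exact Nat.eq_of_mul_eq_mul_left (by omega) hc
  -- L is Lagrangian
  have hLag : IsLagrangianAdd b L := by
    intro a
    constructor
    · rintro ha j hj
      rw [hmemL] at ha hj
      obtain ⟨x, rfl⟩ := ha
      obtain ⟨y, rfl⟩ := hj
      have : b (m • x) (m • y) = ζ ^ (0 : ℤ) := by
        apply key
        push_cast [hval]
        show ((m • x.1) * (m • y.2) : ZMod d) - (m • x.2) * (m • y.1) = 0
        simp only [nsmul_eq_mul]
        have hm0 : ((m : ZMod d)) ^ 2 = 0 := by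
          have h : ((m ^ 2 : ℕ) : ZMod d) = 0 := ZMod.natCast_self d
          push_cast at h
          exact h
        linear_combination (x.1 * y.2 - x.2 * y.1) * hm0
      simpa using this
    · intro h
      have h1' := h (m • ((0 : ZMod d), (1 : ZMod d))) ((hmemL _).mpr ⟨_, rfl⟩)
      have h2' := h (m • ((1 : ZMod d), (0 : ZMod d))) ((hmemL _).mpr ⟨_, rfl⟩)
      have e1 : (m • ((0 : ZMod d), (1 : ZMod d))) = ((0 : ZMod d), (m : ZMod d)) := by
        ext <;> simp [nsmul_eq_mul]
      have e2 : (m • ((1 : ZMod d), (0 : ZMod d))) = ((m : ZMod d), (0 : ZMod d)) := by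
        ext <;> simp [nsmul_eq_mul]
      rw [e1] at h1'
      rw [e2] at h2'
      simp only [b, ZMod.val_zero, hmval] at h1' h2'
      push_cast at h1' h2'
      rw [mul_zero, sub_zero] at h1'
      rw [mul_zero, zero_sub] at h2'
      rw [hζ'.zpow_eq_one_iff_dvd] at h1'
      rw [hζ'.zpow_eq_one_iff_dvd, dvd_neg] at h2'
      have d1 : m ∣ a.1.val := by
        have h' : (d : ℤ) ∣ ((a.1.val * m : ℕ) : ℤ) := by exact_mod_cast h1'
        have := Int.natCast_dvd_natCast.mp h'
        exact hdvd _ (by rwa [Nat.mul_comm] at this)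
      have d2 : m ∣ a.2.val := by
        have h' : (d : ℤ) ∣ ((a.2.val * m : ℕ) : ℤ) := by exact_mod_cast h2'
        have := Int.natCast_dvd_natCast.mp h'
        exact hdvd _ (by rwa [Nat.mul_comm] at this)
      obtain ⟨c1, hc1⟩ := exists_smul_of_dvd_val (by omega) d1
      obtain ⟨c2, hc2⟩ := exists_smul_of_dvd_val (by omega) d2
      exact (hmemL a).mpr ⟨(c1, c2), by
        exact Prod.ext (by simpa [d] using hc1.symm) (by simpa [d] using hc2.symm)⟩
  refine ⟨hb1, hb2, halt, hnd, hLag, ?_⟩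
  rintro ⟨K, hLag', hKlag, hinf, hsum, hinj, hsurj⟩
  -- K ≤ L
  have hKL : K ≤ L := by
    intro k hk
    have hmk : m • k ∈ L ⊓ K := ⟨(hmemL _).mpr ⟨k, rfl⟩, AddSubgroup.nsmul_mem K hk m⟩
    rw [hinf, AddSubgroup.mem_bot] at hmk
    have hk1 : (m : ZMod d) * k.1 = 0 := by
      have : (m • k).1 = 0 := by rw [hmk]; rfl
      simpa [nsmul_eq_mul] using this
    have hk2 : (m : ZMod d) * k.2 = 0 := by
      have : (m • k).2 = 0 := by rw [hmk]; rfl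
      simpa [nsmul_eq_mul] using this
    have dv1 : m ∣ k.1.val := by
      apply hdvd
      have : ((m * k.1.val : ℕ) : ZMod d) = 0 := by
        push_cast
        rw [ZMod.natCast_val, ZMod.cast_id]
        exact hk1
      exact (ZMod.natCast_eq_zero_iff _ _).mp this
    have dv2 : m ∣ k.2.val := by
      apply hdvd
      have : ((m * k.2.val : ℕ) : ZMod d) = 0 := by
        push_cast
        rw [ZMod.natCast_val, ZMod.cast_id]
        exact hk2
      exact (ZMod.natCast_eq_zero_iff _ _).mp this
    obtain ⟨c1, hc1⟩ := exists_smul_of_dvd_val (show 0 < m by omega) dv1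
    obtain ⟨c2, hc2⟩ := exists_smul_of_dvd_val (show 0 < m by omega) dv2
    exact (hmemL k).mpr ⟨(c1, c2),
      Prod.ext (by simpa [d] using hc1.symm) (by simpa [d] using hc2.symm)⟩
  have hKbot : K = ⊥ := by
    rw [← hinf, inf_eq_right.mpr hKL]
  -- the nontrivial character j ↦ b (0,1) j on L
  let φ : AddChar ↥L ℂˣ :=
    { toFun := fun j => b ((0 : ZMod d), (1 : ZMod d)) (j : ZMod d × ZMod d)
      map_zero_eq_one' := by
        simp only [ZeroMemClass.coe_zero]
        simp [b, ZMod.val_zero]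
      map_add_eq_mul' := fun j j' => by
        simpa using hb2 ((0 : ZMod d), (1 : ZMod d)) (j : ZMod d × ZMod d) (j' : ZMod d × ZMod d) }
  obtain ⟨k, hk⟩ := hsurj φ
  have hk0 : (k : ZMod d × ZMod d) = 0 := by
    have hle : K ≤ ⊥ := hKbot.le
    exact AddSubgroup.mem_bot.mp (hle k.2)
  -- evaluate at j₀ = (m, 0) ∈ L
  have hj0 : ((m : ZMod d), (0 : ZMod d)) ∈ L := by
    refine (hmemL _).mpr ⟨((1 : ZMod d), (0 : ZMod d)), ?_⟩
    ext <;> simp [nsmul_eq_mul]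
  have heval := hk ⟨((m : ZMod d), (0 : ZMod d)), hj0⟩
  rw [hk0] at heval
  have hLHS : b 0 ((m : ZMod d), (0 : ZMod d)) = 1 := by
    simp [b, ZMod.val_zero]
  have hRHS : φ ⟨((m : ZMod d), (0 : ZMod d)), hj0⟩ = ζ ^ (-(m : ℤ)) := by
    show b ((0 : ZMod d), (1 : ZMod d)) ((m : ZMod d), (0 : ZMod d)) = ζ ^ (-(m : ℤ))
    simp only [b, ZMod.val_zero, hval_one, hmval]
    push_cast
    norm_num
  rw [hLHS, hRHS] at heval
  have : (d : ℤ) ∣ -(m : ℤ) := (hζ'.zpow_eq_one_iff_dvd _).mp heval.symm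
  rw [dvd_neg] at this
  have : d ∣ m := Int.natCast_dvd_natCast.mp this
  have := Nat.le_of_dvd (by omega) this
  omega
end

section
/- Let G be a commutative group, J a subgroup of G of finite index, ρ a representation of G on a complex vector space V, and χ' : J → ℂˣ a group homomorphism. For a group homomorphism χ : G → ℂˣ let Hom_G(V, ℂ_χ) denote the space of ℂ-linear functionals λ on V satisfying λ(ρ(g)v) = χ(g)·λ(v) for all g ∈ G and v ∈ V, and let Hom_J(V, ℂ_{χ'}) denote the space of ℂ-linear functionals λ on V satisfying λ(ρ(j)v) = χ'(j)·λ(v) for all j ∈ J and v ∈ V. Then Hom_J(V, ℂ_{χ'}) is the internal direct sum, over the (finitely many) homomorphisms χ : G → ℂˣ whose restriction to J equals χ', of the subspaces Hom_G(V, ℂ_χ). -/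
/-!
Since `ℂˣ` is divisible, `χ'` extends to some `χ₀`, and the extensions of `χ'` are then exactly
the `χ₀ · η` with `η` a character of the finite abelian group `G ⧸ J`; so there are finitely many,
and for `g ∉ J` their values at `g` sum to zero. Eigenfunctionals for distinct characters are
independent, being simultaneous eigenvectors of the commuting operators `ρ(g)ᵀ`. For
`f ∈ Hom_J(V, ℂ_χ')` and `χ` extending `χ'`, the map `g ↦ χ(g)⁻¹ • f ∘ ρ(g)` is constant on cosets
of `J`, so its sum over `G ⧸ J` lies in `Hom_G(V, ℂ_χ)`; summing these over all extensions `χ`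
returns `f` times their number, by the vanishing of the character sums above.
-/

/-- The space of `(H, χ)`-eigenfunctionals on a representation `(ρ, V)` of `G`:
linear functionals `f` on `V` with `f(ρ(ι h) v) = χ(h) · f(v)` for all `h` in `H`
(`ι : H →* G` being typically a subgroup inclusion or the identity of `G`). -/
def eigenFunctionals {G : Type*} [CommGroup G] {V : Type*} [AddCommGroup V] [Module ℂ V]
    (ρ : Representation ℂ G V) {H : Type*} [Group H] (ι : H →* G) (χ : H →* ℂˣ) :
    Submodule ℂ (Module.Dual ℂ V) where
  carrier := {f | ∀ (h : H) (v : V), f (ρ (ι h) v) = (χ h : ℂ) * f v}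
  add_mem' := by
    intro f g hf hg h v
    simp only [LinearMap.add_apply, hf h v, hg h v, mul_add]
  zero_mem' := by
    intro h v
    simp
  smul_mem' := by
    intro c f hf h v
    simp only [LinearMap.smul_apply, smul_eq_mul, hf h v]
    ring

noncomputable instance IsAlgClosed.rootableByUnits (K : Type*) [Field K] [IsAlgClosed K] :
    RootableBy Kˣ ℕ :=
  rootableByOfPowLeftSurj _ _ fun {n} hn u => by
    obtain ⟨z, hz⟩ := IsAlgClosed.exists_pow_nat_eq (u : K) (Nat.pos_of_ne_zero hn)
    have hz0 : z ≠ 0 := by rintro rfl; exact u.ne_zero (by rw [← hz, zero_pow hn])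
    exact ⟨Units.mk0 z hz0, Units.ext (by simpa using hz)⟩

noncomputable instance IsAlgClosed.rootableByUnitsInt (K : Type*) [Field K] [IsAlgClosed K] :
    RootableBy Kˣ ℤ :=
  Group.rootableByIntOfRootableByNat _

theorem Subgroup.exists_monoidHom_extension {G A : Type*} [CommGroup G] [CommGroup A]
    [RootableBy A ℤ] (J : Subgroup G) (φ : J →* A) : ∃ ψ : G →* A, ∀ j : J, ψ j = φ j := by
  let _ : DivisibleBy (Additive A) ℤ := divisibleByOfSMulRightSurj _ _ fun hn a => by
    obtain ⟨b, hb⟩ := RootableBy.surjective_pow (α := ℤ) (A := A) hn a.toMul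
    exact ⟨.ofMul b, congrArg Additive.ofMul hb⟩
  obtain ⟨ψ, hψ⟩ := (Module.Baer.of_divisible (Additive A)).extension_property_addMonoidHom
    J.subtype.toAdditive Subtype.val_injective φ.toAdditive
  exact ⟨MonoidHom.toAdditive.symm ψ, fun j => DFunLike.congr_fun hψ j⟩

theorem QuotientGroup.sum_out_mul {G M : Type*} [Group G] [AddCommMonoid M] {J : Subgroup G}
    [J.Normal] [Fintype (G ⧸ J)] {φ : G → M} (hφ : ∀ g, ∀ j ∈ J, φ (g * j) = φ g) (h : G) :
    ∑ q : G ⧸ J, φ (q.out * h) = ∑ q : G ⧸ J, φ q.out := by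
  have hout (g : G) : φ (g : G ⧸ J).out = φ g := by
    obtain ⟨j, hj⟩ := QuotientGroup.mk_out_eq_mul J g
    rw [hj, hφ g j j.2]
  calc ∑ q : G ⧸ J, φ (q.out * h) = ∑ q : G ⧸ J, φ (q * h).out := by
        simp only [← hout (_ * h), QuotientGroup.mk_mul, QuotientGroup.out_eq']
    _ = ∑ q : G ⧸ J, φ q.out := Fintype.sum_equiv (Equiv.mulRight (h : G ⧸ J)) _ _ fun _ => rfl

open Module

theorem Representation.apply_apply_comm {k G V : Type*} [CommSemiring k] [CommMonoid G]
    [AddCommMonoid V] [Module k V] (ρ : Representation k G V) (g h : G) (v : V) :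
    ρ g (ρ h v) = ρ h (ρ g v) := by
  rw [← Module.End.mul_apply, ← map_mul, mul_comm, map_mul, Module.End.mul_apply]

section
variable {G : Type*} [CommGroup G] {V : Type*} [AddCommGroup V] [Module ℂ V]
  (ρ : Representation ℂ G V)

theorem mem_eigenFunctionals_id_iff {χ : G →* ℂˣ} {f : Dual ℂ V} :
    f ∈ eigenFunctionals ρ (MonoidHom.id G) χ ↔ ∀ g, (ρ g).dualMap f = (χ g : ℂ) • f := by
  simp only [LinearMap.ext_iff]
  rfl

theorem eigenFunctionals_id_le_subtype {J : Subgroup G} {χ' : J →* ℂˣ} {χ : G →* ℂˣ}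
    (hχ : ∀ j : J, χ j = χ' j) :
    eigenFunctionals ρ (MonoidHom.id G) χ ≤ eigenFunctionals ρ J.subtype χ' :=
  fun _ hf j v => hχ j ▸ hf j v

theorem eigenFunctionals_id_le_maxGenEigenspace (χ : G →* ℂˣ) :
    eigenFunctionals ρ (MonoidHom.id G) χ ≤ ⨅ g, End.maxGenEigenspace (ρ g).dualMap (χ g) := by
  intro f hf
  simp only [Submodule.mem_iInf]
  intro g
  refine Module.End.eigenspace_le_maxGenEigenspace (Module.End.mem_eigenspace_iff.mpr ?_)
  exact (mem_eigenFunctionals_id_iff ρ).mp hf g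

theorem iSupIndep_eigenFunctionals_id :
    iSupIndep fun χ : G →* ℂˣ => eigenFunctionals ρ (MonoidHom.id G) χ := by
  have hcomm (g h : G) : Commute (ρ g).dualMap (ρ h).dualMap := by
    ext f v
    exact congrArg f (ρ.apply_apply_comm h g v)
  have hchar : Function.Injective fun (χ : G →* ℂˣ) (g : G) => (χ g : ℂ) :=
    fun χ ψ h => MonoidHom.ext fun g => Units.ext (congrFun h g)
  exact ((Module.End.independent_iInf_maxGenEigenspace_of_forall_mapsTo _
    fun g h μ => Module.End.mapsTo_maxGenEigenspace_of_comm (hcomm h g) μ).comp hchar).mono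
    (eigenFunctionals_id_le_maxGenEigenspace ρ)

abbrev CharacterExtensions (J : Subgroup G) (χ' : J →* ℂˣ) : Type _ :=
  {χ : G →* ℂˣ // ∀ j : J, χ (j : G) = χ' j}

variable {J : Subgroup G} {χ' : J →* ℂˣ}

noncomputable def CharacterExtensions.equivOfExtension {χ₀ : G →* ℂˣ}
    (hχ₀ : ∀ j : J, χ₀ j = χ' j) : (G ⧸ J →* ℂˣ) ≃ CharacterExtensions J χ' where
  toFun η := ⟨χ₀ * η.comp (QuotientGroup.mk' J), fun j => by
    simp [(QuotientGroup.eq_one_iff (j : G)).mpr j.2, hχ₀]⟩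
  invFun χ := QuotientGroup.lift J (χ.1 * χ₀⁻¹) fun g hg => by
    simp [χ.2 ⟨g, hg⟩, hχ₀ ⟨g, hg⟩]
  left_inv η := by
    ext g
    simp
  right_inv χ := by
    ext g
    simp

instance : Nonempty (CharacterExtensions J χ') :=
  let ⟨χ₀, hχ₀⟩ := J.exists_monoidHom_extension χ'
  ⟨⟨χ₀, hχ₀⟩⟩

instance [J.FiniteIndex] : Finite (CharacterExtensions J χ') := by
  obtain ⟨χ₀, hχ₀⟩ := J.exists_monoidHom_extension χ'
  exact .of_equiv _ (CharacterExtensions.equivOfExtension hχ₀)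

theorem CharacterExtensions.sum_apply_eq_zero [Fintype (G ⧸ J)]
    [Fintype (CharacterExtensions J χ')] {g : G} (hg : g ∉ J) :
    ∑ χ : CharacterExtensions J χ', (χ.1 g : ℂ) = 0 := by
  obtain ⟨χ₀, hχ₀⟩ := J.exists_monoidHom_extension χ'
  have : Fintype (G ⧸ J →* ℂˣ) := Fintype.ofFinite _
  obtain ⟨η, hη⟩ := CommGroup.exists_apply_ne_one_of_hasEnoughRootsOfUnity (G ⧸ J) ℂ
    (a := (g : G ⧸ J)) (by rwa [Ne, QuotientGroup.eq_one_iff])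
  have hev : (Units.coeHom ℂ).comp (MonoidHom.eval (g : G ⧸ J)) ≠ 1 :=
    fun h => hη (Units.ext (DFunLike.congr_fun h η))
  calc ∑ χ : CharacterExtensions J χ', (χ.1 g : ℂ)
      = ∑ η : G ⧸ J →* ℂˣ, (χ₀ g : ℂ) * (η g : ℂ) := by
        simp [← (equivOfExtension hχ₀).sum_comp, equivOfExtension]
    _ = 0 := by
        rw [← Finset.mul_sum, mul_eq_zero]
        exact .inr (sum_hom_units_eq_zero _ hev)

noncomputable def twistedTranslate (χ : G →* ℂˣ) (f : Dual ℂ V) (g : G) : Dual ℂ V :=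
  (χ g⁻¹ : ℂ) • (ρ g).dualMap f

theorem twistedTranslate_one (χ : G →* ℂˣ) (f : Dual ℂ V) : twistedTranslate ρ χ f 1 = f := by
  simp [twistedTranslate, Module.End.one_eq_id]

theorem dualMap_twistedTranslate (χ : G →* ℂˣ) (f : Dual ℂ V) (g h : G) :
    (ρ h).dualMap (twistedTranslate ρ χ f g) = (χ h : ℂ) • twistedTranslate ρ χ f (g * h) := by
  ext v
  simp only [twistedTranslate, LinearMap.smul_apply, LinearMap.dualMap_apply, map_inv,
    Units.val_inv_eq_inv_val, map_mul, End.mul_apply, mul_inv_rev, Units.val_mul, smul_eq_mul]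
  rw [← mul_assoc, ← mul_assoc, mul_inv_cancel₀ (χ h).ne_zero, one_mul]

theorem twistedTranslate_mul_of_mem {f : Dual ℂ V} (hf : f ∈ eigenFunctionals ρ J.subtype χ')
    {χ : G →* ℂˣ} (hχ : ∀ j : J, χ j = χ' j) (g : G) {j : G} (hj : j ∈ J) :
    twistedTranslate ρ χ f (g * j) = twistedTranslate ρ χ f g := by
  have hjv (v : V) : f (ρ j (ρ g v)) = χ j * f (ρ g v) := hχ ⟨j, hj⟩ ▸ hf ⟨j, hj⟩ (ρ g v)
  ext v
  simp only [twistedTranslate, mul_inv_rev, map_mul, map_inv, Units.val_mul,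
    Units.val_inv_eq_inv_val, LinearMap.smul_apply, LinearMap.dualMap_apply, End.mul_apply,
    smul_eq_mul]
  rw [ρ.apply_apply_comm, hjv]
  field_simp

variable (J) in
/-- For `χ` extending `χ'`, this is `[G : J]` times the projection of `Hom_J(V, ℂ_χ')` onto its
summand `Hom_G(V, ℂ_χ)`. -/
noncomputable def twistedCosetSum [Fintype (G ⧸ J)] (χ : G →* ℂˣ) (f : Dual ℂ V) : Dual ℂ V :=
  ∑ q : G ⧸ J, twistedTranslate ρ χ f q.out

theorem twistedCosetSum_mem [Fintype (G ⧸ J)] {f : Dual ℂ V}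
    (hf : f ∈ eigenFunctionals ρ J.subtype χ') {χ : G →* ℂˣ} (hχ : ∀ j : J, χ j = χ' j) :
    twistedCosetSum ρ J χ f ∈ eigenFunctionals ρ (MonoidHom.id G) χ := by
  rw [mem_eigenFunctionals_id_iff]
  intro h
  simp only [twistedCosetSum, map_sum, dualMap_twistedTranslate, ← Finset.smul_sum]
  rw [QuotientGroup.sum_out_mul (fun g j hj => twistedTranslate_mul_of_mem ρ hf hχ g hj) h]

theorem sum_twistedTranslate_of_mem [Fintype (CharacterExtensions J χ')] {f : Dual ℂ V}
    (hf : f ∈ eigenFunctionals ρ J.subtype χ') {g : G} (hg : g ∈ J) :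
    ∑ χ : CharacterExtensions J χ', twistedTranslate ρ χ.1 f g =
      Fintype.card (CharacterExtensions J χ') • f := by
  have hχ (χ : CharacterExtensions J χ') : twistedTranslate ρ χ.1 f g = f := by
    rw [← one_mul g, twistedTranslate_mul_of_mem ρ hf χ.2 1 hg, twistedTranslate_one]
  simp [hχ]

theorem sum_twistedTranslate_of_notMem [Fintype (G ⧸ J)] [Fintype (CharacterExtensions J χ')]
    (f : Dual ℂ V) {g : G} (hg : g ∉ J) :
    ∑ χ : CharacterExtensions J χ', twistedTranslate ρ χ.1 f g = 0 := by
  simp only [twistedTranslate, ← Finset.sum_smul]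
  rw [CharacterExtensions.sum_apply_eq_zero (inv_mem_iff.not.mpr hg), zero_smul]

theorem sum_twistedCosetSum [Fintype (G ⧸ J)] [Fintype (CharacterExtensions J χ')]
    {f : Dual ℂ V} (hf : f ∈ eigenFunctionals ρ J.subtype χ') :
    ∑ χ : CharacterExtensions J χ', twistedCosetSum ρ J χ.1 f =
      Fintype.card (CharacterExtensions J χ') • f := by
  have hout (q : G ⧸ J) : q.out ∈ J ↔ q = 1 := by
    rw [← QuotientGroup.eq_one_iff, QuotientGroup.out_eq']
  simp only [twistedCosetSum]
  rw [Finset.sum_comm, Finset.sum_eq_single_of_mem 1 (Finset.mem_univ _)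
    fun q _ hq => sum_twistedTranslate_of_notMem ρ f ((hout q).not.mpr hq)]
  exact sum_twistedTranslate_of_mem ρ hf ((hout 1).mpr rfl)

end

/-- Lemma 3.5 of the paper, abstractly: for a representation `ρ` of a commutative group `G`
on a complex vector space `V`, a finite-index subgroup `J` of `G`, and a character
`χ' : J → ℂˣ`, the set of characters of `G` extending `χ'` is finite, and the space
`Hom_J(V, ℂ_{χ'})` of `(J, χ')`-eigenfunctionals is the internal direct sum of the
subspaces `Hom_G(V, ℂ_χ)` over the extensions `χ` of `χ'` to `G`. -/
theorem eigenFunctionals_directSum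
    {G : Type*} [CommGroup G] {V : Type*} [AddCommGroup V] [Module ℂ V]
    (ρ : Representation ℂ G V) (J : Subgroup G) [J.FiniteIndex] (χ' : ↥J →* ℂˣ) :
    Finite {χ : G →* ℂˣ // ∀ j : J, χ (j : G) = χ' j} ∧
    iSupIndep (fun χ : {χ : G →* ℂˣ // ∀ j : J, χ (j : G) = χ' j} =>
      eigenFunctionals ρ (MonoidHom.id G) χ.1) ∧
    (⨆ χ : {χ : G →* ℂˣ // ∀ j : J, χ (j : G) = χ' j},
        eigenFunctionals ρ (MonoidHom.id G) χ.1) = eigenFunctionals ρ J.subtype χ' := by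
  have : Fintype (G ⧸ J) := Fintype.ofFinite _
  have : Fintype (CharacterExtensions J χ') := Fintype.ofFinite _
  refine ⟨inferInstance, (iSupIndep_eigenFunctionals_id ρ).comp Subtype.val_injective,
    le_antisymm (iSup_le fun χ => eigenFunctionals_id_le_subtype ρ χ.2) fun f hf => ?_⟩
  have hcard : (Fintype.card (CharacterExtensions J χ') : ℂ) ≠ 0 :=
    Nat.cast_ne_zero.mpr Fintype.card_ne_zero
  have hf_eq : f = (Fintype.card (CharacterExtensions J χ') : ℂ)⁻¹ •
      ∑ χ : CharacterExtensions J χ', twistedCosetSum ρ J χ.1 f := by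
    rw [sum_twistedCosetSum ρ hf, ← Nat.cast_smul_eq_nsmul ℂ, smul_smul, inv_mul_cancel₀ hcard,
      one_smul]
  rw [hf_eq]
  exact Submodule.smul_mem _ _ <| Submodule.sum_mem _ fun χ _ =>
    Submodule.mem_iSup_of_mem χ (twistedCosetSum_mem ρ hf χ.2)
end

section
/- Let A and M be commutative groups and c : A × A → M a bilinear map, and let à be the group whose underlying set is A × M with multiplication (a, ε)·(a', ε') = (a·a', c(a, a')·ε·ε'). For a subgroup B of A, the subgroup B × M of à is a maximal abelian subgroup of à if and only if B = {a ∈ A : c(a, b) = c(b, a) for all b ∈ B}. -/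
/-- The underlying set `A × M` of the extension group `Ã`. -/
@[ext]
structure Tilde (A M : Type*) where
  fst : A
  snd : M

namespace Tilde

variable {A M : Type*} [CommGroup A] [CommGroup M]

/-- Multiplication `(a, ε)·(a', ε') = (a·a', c(a, a')·ε·ε')` on `A × M`. -/
def tmul (c : A → A → M) (x y : Tilde A M) : Tilde A M :=
  ⟨x.fst * y.fst, c x.fst y.fst * (x.snd * y.snd)⟩

/-- For bilinear `c`, the multiplication `tmul c` makes `A × M` a group `Ã`. -/
def tildeGroup (c : A → A → M)
    (h1 : ∀ x y z : A, c (x * y) z = c x z * c y z)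
    (h2 : ∀ x y z : A, c x (y * z) = c x y * c x z) :
    Group (Tilde A M) where
  mul := tmul c
  one := ⟨1, 1⟩
  inv x := ⟨x.fst⁻¹, c x.fst x.fst * x.snd⁻¹⟩
  mul_assoc x y z := by
    show tmul c (tmul c x y) z = tmul c x (tmul c y z)
    unfold tmul
    refine Tilde.ext (mul_assoc _ _ _) ?_
    show c (x.fst * y.fst) z.fst * (c x.fst y.fst * (x.snd * y.snd) * z.snd)
        = c x.fst (y.fst * z.fst) * (x.snd * (c y.fst z.fst * (y.snd * z.snd)))
    rw [h1, h2]
    ac_rfl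
  one_mul x := by
    have hc1 : ∀ y : A, c 1 y = 1 := by
      intro y
      have := h1 1 1 y
      rw [one_mul] at this
      exact (left_eq_mul.mp this)
    show tmul c ⟨1, 1⟩ x = x
    unfold tmul
    ext <;> simp [hc1]
  mul_one x := by
    have hc1 : ∀ y : A, c y 1 = 1 := by
      intro y
      have := h2 y 1 1
      rw [one_mul] at this
      exact (left_eq_mul.mp this)
    show tmul c x ⟨1, 1⟩ = x
    unfold tmul
    ext <;> simp [hc1]
  inv_mul_cancel x := by
    have hc1 : ∀ y : A, c 1 y = 1 := by
      intro y
      have := h1 1 1 y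
      rw [one_mul] at this
      exact (left_eq_mul.mp this)
    have hinv : c x.fst⁻¹ x.fst * c x.fst x.fst = 1 := by
      have h := h1 x.fst⁻¹ x.fst x.fst
      rw [inv_mul_cancel, hc1] at h
      exact h.symm
    show tmul c ⟨x.fst⁻¹, c x.fst x.fst * x.snd⁻¹⟩ x = ⟨1, 1⟩
    unfold tmul
    refine Tilde.ext (inv_mul_cancel _) ?_
    show c x.fst⁻¹ x.fst * ((c x.fst x.fst * x.snd⁻¹) * x.snd) = 1
    calc c x.fst⁻¹ x.fst * ((c x.fst x.fst * x.snd⁻¹) * x.snd)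
        = (c x.fst⁻¹ x.fst * c x.fst x.fst) * (x.snd⁻¹ * x.snd) := by ac_rfl
      _ = 1 := by rw [hinv, inv_mul_cancel, mul_one]

end Tilde

/-! A subgroup of any group is maximal abelian exactly when it is its own centralizer. In `Ã`
two elements commute iff `c` is symmetric on their first coordinates, the `M`-coordinates being
central; so the centralizer of `B × M` is the preimage of `{a : ∀ b ∈ B, c a b = c b a}`. -/

namespace Subgroup

variable {G : Type*} [Group G]

theorem eq_of_le_of_forall_mul_comm_of_eq_centralizer {S T : Subgroup G}
    (hS : S = centralizer (S : Set G)) (hT : ∀ x ∈ T, ∀ y ∈ T, x * y = y * x) (hST : S ≤ T) :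
    S = T :=
  hST.antisymm fun x hx ↦ hS ▸ mem_centralizer_iff.mpr fun y hy ↦ hT y (hST hy) x hx

theorem mem_of_mem_centralizer_of_maximal_mul_comm {S : Subgroup G}
    (hmax : ∀ T : Subgroup G, (∀ x ∈ T, ∀ y ∈ T, x * y = y * x) → S ≤ T → S = T)
    (habel : ∀ x ∈ S, ∀ y ∈ S, x * y = y * x) {g : G} (hg : g ∈ centralizer (S : Set G)) :
    g ∈ S := by
  have hcomm : ∀ x ∈ insert g (S : Set G), ∀ y ∈ insert g (S : Set G), x * y = y * x := by
    rintro x (rfl | hx) y (rfl | hy)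
    · rfl
    · exact (hg y hy).symm
    · exact hg x hx
    · exact habel x hx y hy
  have hT := le_centralizer_iff_isMulCommutative.mpr (isMulCommutative_closure hcomm)
  rw [hmax _ (fun x hx y hy ↦ hT hy x hx) ((Set.subset_insert g _).trans subset_closure)]
  exact subset_closure (Set.mem_insert g _)

theorem eq_centralizer_iff_maximal_mul_comm (S : Subgroup G) :
    S = centralizer (S : Set G) ↔ (∀ x ∈ S, ∀ y ∈ S, x * y = y * x) ∧
      ∀ T : Subgroup G, (∀ x ∈ T, ∀ y ∈ T, x * y = y * x) → S ≤ T → S = T := by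
  constructor
  · intro hS
    have habel : ∀ x ∈ S, ∀ y ∈ S, x * y = y * x :=
      fun x hx y hy ↦ (hS.le hx y hy).symm
    exact ⟨habel, fun T hT ↦ eq_of_le_of_forall_mul_comm_of_eq_centralizer hS hT⟩
  · rintro ⟨habel, hmax⟩
    exact le_antisymm (fun x hx y hy ↦ habel y hy x hx)
      fun g hg ↦ mem_of_mem_centralizer_of_maximal_mul_comm hmax habel hg

end Subgroup

namespace Tilde

variable {A M : Type*} [CommGroup A] [CommGroup M] (c : A → A → M)

theorem tmul_comm_iff (x y : Tilde A M) :
    tmul c x y = tmul c y x ↔ c x.fst y.fst = c y.fst x.fst := by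
  simp only [tmul, Tilde.mk.injEq, mul_comm x.fst, mul_comm x.snd, mul_left_inj, true_and]

theorem forall_tmul_comm_iff {B : Set A} {S : Set (Tilde A M)}
    (hS : ∀ x : Tilde A M, x ∈ S ↔ x.fst ∈ B) (x : Tilde A M) :
    (∀ y ∈ S, tmul c y x = tmul c x y) ↔ ∀ b ∈ B, c x.fst b = c b x.fst := by
  simp only [hS, tmul_comm_iff, eq_comm (a := c _ x.fst)]
  exact ⟨fun h b hb ↦ h ⟨b, 1⟩ hb, fun h y hy ↦ h y.fst hy⟩

end Tilde

/-- Abstract form of Lemma 4.1: in the central extension `Ã` of `A` by `M` defined by a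
bilinear cocycle `c`, for a subgroup `B` of `A`, the subgroup `B × M` of `Ã` (i.e. the
subgroup whose elements are those `x` with `x.fst ∈ B`) is a maximal abelian subgroup of
`Ã` if and only if `B = {a ∈ A : c(a, b) = c(b, a) for all b ∈ B}`. -/
theorem tilde_maximal_abelian_iff
    {A M : Type*} [CommGroup A] [CommGroup M] (c : A → A → M)
    (h1 : ∀ x y z : A, c (x * y) z = c x z * c y z)
    (h2 : ∀ x y z : A, c x (y * z) = c x y * c x z)
    (B : Subgroup A) :
    let _G : Group (Tilde A M) := Tilde.tildeGroup c h1 h2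
    ∀ S : Subgroup (Tilde A M), (∀ x : Tilde A M, x ∈ S ↔ x.fst ∈ B) →
      (((∀ x ∈ S, ∀ y ∈ S, x * y = y * x) ∧
          ∀ T : Subgroup (Tilde A M), (∀ x ∈ T, ∀ y ∈ T, x * y = y * x) → S ≤ T → S = T) ↔
        ∀ a : A, a ∈ B ↔ ∀ b ∈ B, c a b = c b a) := by
  intro _G S hS
  have hcent (x : Tilde A M) :
      x ∈ Subgroup.centralizer (S : Set (Tilde A M)) ↔ ∀ b ∈ B, c x.fst b = c b x.fst :=
    Tilde.forall_tmul_comm_iff c hS x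
  rw [← Subgroup.eq_centralizer_iff_maximal_mul_comm, SetLike.ext_iff]
  simp only [hS, hcent]
  exact ⟨fun h a ↦ h ⟨a, 1⟩, fun h x ↦ h x.fst⟩
end

section
/- Let n ≥ 1 be an integer, ξ ∈ ℂ a primitive n-th root of unity, and let c, x ∈ ℂ with x ≠ 0 and xⁿ ≠ 1. Then for every integer t with 0 ≤ t ≤ n − 1: (1/n)·Σ_{l=0}^{n−1} ξ^{t·l}·(1 − c·x⁻¹·ξ^{l})/(1 − x·ξ^{−l}) equals x^{t}·(1 − c)/(1 − xⁿ) if 0 ≤ t ≤ n − 2, and equals x^{n−1}·(1 − c·x^{−n})/(1 − xⁿ) if t = n − 1. -/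
/-!
For `yⁿ = 1` and `xⁿ ≠ 1`, the geometric series gives
`1 / (1 - x y⁻¹) = (∑_{j<n} xʲ y⁻ʲ) / (1 - xⁿ)`, so averaging `yᵗ / (1 - x y⁻¹)` over the
`n`-th roots of unity `y = ξˡ` extracts by orthogonality the coefficient `x^(t mod n) / (1 - xⁿ)`.
The sum in question is this average at `t` minus `c x⁻¹` times the one at `t + 1`; the case
`t = n - 1` differs because there `t + 1` wraps around to `0`.
-/

open Finset

variable {K : Type*} [Field K] {n : ℕ}

theorem inv_one_sub_eq_geom_sum_div {z : K} (hz : z ^ n ≠ 1) :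
    (1 - z)⁻¹ = (∑ j ∈ range n, z ^ j) / (1 - z ^ n) := by
  have hz1 : 1 - z ≠ 0 := sub_ne_zero.mpr fun h => hz (by rw [← h, one_pow])
  rw [eq_div_iff (sub_ne_zero.mpr (Ne.symm hz)), ← mul_neg_geom_sum, inv_mul_cancel_left₀ hz1]

namespace IsPrimitiveRoot

variable {ξ : K}

theorem sum_pow_mul_inv_pow_pow (hξ : IsPrimitiveRoot ξ n) {i j : ℕ} (hi : i < n) (hj : j < n) :
    ∑ l ∈ range n, ξ ^ (i * l) * ((ξ ^ l)⁻¹) ^ j = if i = j then (n : K) else 0 := by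
  have hξ0 : ξ ≠ 0 := hξ.ne_zero (by omega)
  set z := ξ ^ i * (ξ ^ j)⁻¹
  have hterm : ∀ l, ξ ^ (i * l) * ((ξ ^ l)⁻¹) ^ j = z ^ l := fun l => by
    rw [mul_pow, inv_pow, inv_pow, ← pow_mul, ← pow_mul, ← pow_mul, mul_comm l j]
  simp only [hterm]
  split_ifs with hij
  · simp [z, hij, hξ0]
  · have hz : z ≠ 1 := fun h =>
      hij (hξ.pow_inj hi hj (by rwa [mul_inv_eq_one₀ (pow_ne_zero _ hξ0)] at h))
    have hzn : z ^ n = 1 := by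
      rw [mul_pow, inv_pow, ← pow_mul, ← pow_mul, mul_comm i, mul_comm j, pow_mul, pow_mul,
        hξ.pow_eq_one, one_pow, one_pow, inv_one, mul_one]
    rw [geom_sum_eq hz, hzn, sub_self, zero_div]

theorem sum_pow_div_one_sub_mul_inv (hξ : IsPrimitiveRoot ξ n) {x : K} (hxn : x ^ n ≠ 1)
    (t : ℕ) :
    ∑ l ∈ range n, ξ ^ (t * l) / (1 - x * (ξ ^ l)⁻¹) = n * x ^ (t % n) / (1 - x ^ n) := by
  have hn : 0 < n := Nat.pos_of_ne_zero fun h => hxn (by rw [h, pow_zero])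
  have hexpand : ∀ l, ξ ^ (t * l) / (1 - x * (ξ ^ l)⁻¹)
      = (∑ j ∈ range n, x ^ j * (ξ ^ (t % n * l) * ((ξ ^ l)⁻¹) ^ j)) / (1 - x ^ n) := fun l => by
    have hzn : (x * (ξ ^ l)⁻¹) ^ n = x ^ n := by
      rw [mul_pow, inv_pow, pow_right_comm, hξ.pow_eq_one, one_pow, inv_one, mul_one]
    rw [div_eq_mul_inv, inv_one_sub_eq_geom_sum_div (hzn ▸ hxn), hzn, mul_div_assoc', mul_sum,
      pow_mul, pow_mul, hξ.eq_orderOf, pow_mod_orderOf]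
    simp only [mul_pow]
    ring_nf
  simp only [hexpand, ← sum_div]
  rw [sum_comm, sum_congr rfl fun j hj => by
    rw [← mul_sum, hξ.sum_pow_mul_inv_pow_pow (Nat.mod_lt t hn) (mem_range.mp hj)]]
  simp [Nat.mod_lt t hn, mul_comm]

end IsPrimitiveRoot

theorem partial_gamma_unramified_sum_general
    (n : ℕ) (ξ : ℂ) (hξ : IsPrimitiveRoot ξ n)
    (c x : ℂ) (hx : x ≠ 0) (hxn : x ^ n ≠ 1)
    (t : ℕ) (ht : t ≤ n - 1) :
    (1 / (n : ℂ)) * ∑ l ∈ Finset.range n,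
        ξ ^ (t * l) * (1 - c * x⁻¹ * ξ ^ l) / (1 - x * (ξ ^ l)⁻¹)
      = if t = n - 1 then x ^ (n - 1) * (1 - c * (x ^ n)⁻¹) / (1 - x ^ n)
        else x ^ t * (1 - c) / (1 - x ^ n) := by
  have hn : 0 < n := Nat.pos_of_ne_zero fun h => hxn (by rw [h, pow_zero])
  have hsplit : ∀ l, ξ ^ (t * l) * (1 - c * x⁻¹ * ξ ^ l) / (1 - x * (ξ ^ l)⁻¹)
      = ξ ^ (t * l) / (1 - x * (ξ ^ l)⁻¹)
        - c * x⁻¹ * (ξ ^ ((t + 1) * l) / (1 - x * (ξ ^ l)⁻¹)) := fun l => by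
    rw [add_one_mul, pow_add]
    ring
  rw [sum_congr rfl fun l _ => hsplit l, sum_sub_distrib, ← mul_sum,
    hξ.sum_pow_div_one_sub_mul_inv hxn, hξ.sum_pow_div_one_sub_mul_inv hxn,
    Nat.mod_eq_of_lt (by omega : t < n)]
  have hn0 : (n : ℂ) ≠ 0 := Nat.cast_ne_zero.mpr hn.ne'
  split_ifs with htn
  · rw [htn, Nat.sub_add_cancel hn, Nat.mod_self, ← pow_sub_one_mul hn.ne' x]
    field_simp
  · rw [Nat.mod_eq_of_lt (by omega : t + 1 < n)]
    field_simp
    ring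

/-- The computational core of the unramified case of Proposition 5.1: for `ξ` a primitive
`n`-th root of unity and `x ≠ 0` with `xⁿ ≠ 1`, and `0 ≤ t ≤ n − 1`,
`(1/n)·Σ_{l=0}^{n−1} ξ^{tl}·(1 − c·x⁻¹·ξ^{l})/(1 − x·ξ^{−l})` equals
`x^t·(1 − c)/(1 − xⁿ)` for `0 ≤ t ≤ n − 2` and `x^{n−1}·(1 − c·x^{−n})/(1 − xⁿ)` for
`t = n − 1`. -/
theorem partial_gamma_unramified_sum
    (n : ℕ) (hn : 1 ≤ n) (ξ : ℂ) (hξ : IsPrimitiveRoot ξ n)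
    (c x : ℂ) (hx : x ≠ 0) (hxn : x ^ n ≠ 1)
    (t : ℕ) (ht : t ≤ n - 1) :
    (1 / (n : ℂ)) * ∑ l ∈ Finset.range n,
        ξ ^ (t * l) * (1 - c * x⁻¹ * ξ ^ l) / (1 - x * (ξ ^ l)⁻¹)
      = if t = n - 1 then x ^ (n - 1) * (1 - c * (x ^ n)⁻¹) / (1 - x ^ n)
        else x ^ t * (1 - c) / (1 - x ^ n) :=
  partial_gamma_unramified_sum_general n ξ hξ c x hx hxn t ht
end

section
/- Let d ≥ 1 be an odd integer, ξ ∈ ℂ a primitive d-th root of unity, and let β, x ∈ ℂ with x ≠ 0 and x^{2d} ≠ 1. Then for every integer t with 0 ≤ t ≤ d − 1: (1/d)·Σ_{l=0}^{d−1} ξ^{2t·l}·((1 − β²) + β·(x⁻¹·ξ^{l} − x·ξ^{−l}))/(1 − x²·ξ^{−2l}) equals x^{2t}·(1 − β²)/(1 − x^{2d}) if t ≠ (d − 1)/2, and equals x^{d−1}·((1 − β²) + β·(x^{−d} − x^{d}))/(1 − x^{2d}) if t = (d − 1)/2. -/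
open scoped BigOperators

/-- geometric sum of a `d`-th root of unity -/
lemma aux_rootsum (d : ℕ) (r : ℂ) (hr : r ^ d = 1) :
    (∑ l ∈ Finset.range d, r ^ l) = if r = 1 then (d : ℂ) else 0 := by
  split_ifs with h
  · subst h; simp
  · have h1 : (∑ l ∈ Finset.range d, r ^ l) * (r - 1) = 0 := by
      rw [geom_sum_mul, hr, sub_self]
    rcases mul_eq_zero.mp h1 with h2 | h2
    · exact h2
    · exact absurd (sub_eq_zero.mp h2) h

/-- characterization of multiples of `2m+1` in the open interval `(-(4m+2), 4m+2)` -/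
lemma aux_dvd (m : ℕ) (a : ℤ) (h1 : -(4*(m:ℤ)+2) < a) (h2 : a < 4*(m:ℤ)+2) :
    ((2*(m:ℤ)+1) ∣ a) ↔ (a = -(2*(m:ℤ)+1) ∨ a = 0 ∨ a = 2*(m:ℤ)+1) := by
  constructor
  · rintro ⟨k, hk⟩
    have hm0 : (0:ℤ) ≤ (m:ℤ) := Int.natCast_nonneg m
    have hk1 : k ≤ 1 := by nlinarith
    have hk2 : -1 ≤ k := by nlinarith
    interval_cases k <;> omega
  · rintro (h | h | h)
    · exact h ▸ (dvd_neg.mpr dvd_rfl)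
    · exact h ▸ dvd_zero _
    · exact h ▸ dvd_rfl

/-- summing `g j * (if d ∣ a j then c else 0)` when the divisibility singles out `j₀` -/
lemma aux_sum_ite (d : ℕ) (g : ℕ → ℂ) (a : ℕ → ℤ) (j₀ : ℕ) (hj₀ : j₀ < d)
    (h : ∀ j, j < d → (((d:ℤ) ∣ a j) ↔ j = j₀)) (c : ℂ) :
    (∑ j ∈ Finset.range d, g j * (if (d:ℤ) ∣ a j then c else 0)) = g j₀ * c := by
  have h2 : ∀ j ∈ Finset.range d,
      g j * (if (d:ℤ) ∣ a j then c else 0) = if j = j₀ then g j * c else 0 := by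
    intro j hj
    rw [mul_ite, mul_zero]
    exact if_congr (h j (Finset.mem_range.mp hj)) rfl rfl
  rw [Finset.sum_congr rfl h2, Finset.sum_ite_eq' (Finset.range d) j₀ (fun j => g j * c),
    if_pos (Finset.mem_range.mpr hj₀)]

/-- The computational core of the unramified case of Proposition 5.3 (`n ≡ 2 mod 4`,
`n = 2d`): for odd `d`, `ξ` a primitive `d`-th root of unity and `x ≠ 0` with
`x^{2d} ≠ 1`, and `0 ≤ t ≤ d − 1`,
`(1/d)·Σ_{l=0}^{d−1} ξ^{2tl}·((1 − β²) + β·(x⁻¹ξ^{l} − xξ^{−l}))/(1 − x²ξ^{−2l})`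
equals `x^{2t}·(1 − β²)/(1 − x^{2d})` when `t ≠ (d−1)/2`, and
`x^{d−1}·((1 − β²) + β·(x^{−d} − x^{d}))/(1 − x^{2d})` when `t = (d−1)/2`. -/
theorem partial_metaplectic_gamma_unramified_sum
    (d : ℕ) (hd : 1 ≤ d) (hodd : Odd d) (ξ : ℂ) (hξ : IsPrimitiveRoot ξ d)
    (β x : ℂ) (hx : x ≠ 0) (hxd : x ^ (2 * d) ≠ 1)
    (t : ℕ) (ht : t ≤ d - 1) :
    (1 / (d : ℂ)) * ∑ l ∈ Finset.range d,
        ξ ^ (2 * t * l) * ((1 - β ^ 2) + β * (x⁻¹ * ξ ^ l - x * (ξ ^ l)⁻¹)) /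
          (1 - x ^ 2 * ((ξ ^ l) ^ 2)⁻¹)
      = if t = (d - 1) / 2 then
          x ^ (d - 1) * ((1 - β ^ 2) + β * ((x ^ d)⁻¹ - x ^ d)) / (1 - x ^ (2 * d))
        else x ^ (2 * t) * (1 - β ^ 2) / (1 - x ^ (2 * d)) := by
  obtain ⟨m, hm⟩ := hodd
  have hmd : d = 2*m + 1 := by omega
  subst hmd
  clear hm hd
  set d := 2*m+1 with hd
  have hd0 : d ≠ 0 := by omega
  have ht' : t ≤ 2*m := by omega
  have hξ0 : ξ ≠ 0 := hξ.ne_zero hd0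
  have hQ : (1 : ℂ) - x ^ (2*d) ≠ 0 := sub_ne_zero.mpr (Ne.symm hxd)
  have hdc : (d : ℂ) ≠ 0 := Nat.cast_ne_zero.mpr hd0
  have hdZ : (d:ℤ) = 2*(m:ℤ)+1 := by push_cast [hd]; ring
  -- the sum of l-th powers of ξ^a
  have hGa : ∀ a : ℤ, (∑ l ∈ Finset.range d, (ξ^a)^l) = if (d:ℤ) ∣ a then (d:ℂ) else 0 := by
    intro a
    have h1 : (ξ^a)^d = 1 := by
      rw [← zpow_natCast (ξ^a) d, ← zpow_mul, mul_comm, zpow_mul, zpow_natCast,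
        hξ.pow_eq_one, one_zpow]
    rw [aux_rootsum d _ h1]
    simp only [hξ.zpow_eq_one_iff_dvd]
  -- rewriting each term of the sum using the finite geometric expansion
  have key : ∀ l ∈ Finset.range d,
      ξ ^ (2*t*l) * ((1 - β^2) + β * (x⁻¹ * ξ^l - x * (ξ^l)⁻¹)) / (1 - x^2 * ((ξ^l)^2)⁻¹)
      = (∑ j ∈ Finset.range d,
          (x^(2*j)*(1-β^2) * (ξ ^ ((2*(t:ℤ)) - 2*(j:ℤ)))^l
            + x^(2*j)*(β*x⁻¹) * (ξ ^ ((2*(t:ℤ)) - 2*(j:ℤ) + 1))^l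
            - x^(2*j)*(β*x) * (ξ ^ ((2*(t:ℤ)) - 2*(j:ℤ) - 1))^l)) / (1 - x ^ (2*d)) := by
    intro l _
    have hz0 : ξ^l ≠ 0 := pow_ne_zero l hξ0
    have hzd : (ξ^l)^d = 1 := by
      rw [← pow_mul, mul_comm, pow_mul, hξ.pow_eq_one, one_pow]
    set w : ℂ := x^2 * ((ξ^l)^2)⁻¹ with hw
    have hinv1 : (((ξ^l)^2)⁻¹ : ℂ) ^ d = 1 := by
      rw [inv_pow, ← pow_mul, mul_comm, pow_mul, hzd, one_pow, inv_one]
    have hwd : w^d = x^(2*d) := by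
      rw [hw, mul_pow, hinv1, mul_one, ← pow_mul]
    have hD : 1 - w ≠ 0 := by
      intro h
      apply hxd
      rw [← hwd, (sub_eq_zero.mp h).symm, one_pow]
    have hgeom : (1 - w) * (∑ j ∈ Finset.range d, w^j) = 1 - x^(2*d) := by
      have h1 := geom_sum_mul w d
      rw [hwd] at h1
      linear_combination -h1
    rw [div_eq_div_iff hD hQ]
    have hpow : ∀ a b : ℕ, (ξ ^ ((a:ℤ) - (b:ℤ)))^l = ξ^(a*l) * (ξ^(b*l))⁻¹ := by
      intro a b
      rw [← zpow_natCast (ξ ^ ((a:ℤ) - (b:ℤ))) l, ← zpow_mul, sub_mul,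
        zpow_sub₀ hξ0, div_eq_mul_inv, ← zpow_natCast ξ (a*l), ← zpow_natCast ξ (b*l)]
      push_cast
      ring_nf
    have e1 : ∀ j : ℕ, ((2*(t:ℤ)) - 2*(j:ℤ)) = ((2*t : ℕ) : ℤ) - ((2*j : ℕ) : ℤ) := by
      intro j; push_cast; ring
    have e2 : ∀ j : ℕ, ((2*(t:ℤ)) - 2*(j:ℤ) + 1) = ((2*t+1 : ℕ) : ℤ) - ((2*j : ℕ) : ℤ) := by
      intro j; push_cast; ring
    have e3 : ∀ j : ℕ, ((2*(t:ℤ)) - 2*(j:ℤ) - 1) = ((2*t : ℕ) : ℤ) - ((2*j+1 : ℕ) : ℤ) := by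
      intro j; push_cast; ring
    have expand : ∀ j ∈ Finset.range d,
        (x^(2*j)*(1-β^2) * (ξ ^ ((2*(t:ℤ)) - 2*(j:ℤ)))^l
          + x^(2*j)*(β*x⁻¹) * (ξ ^ ((2*(t:ℤ)) - 2*(j:ℤ) + 1))^l
          - x^(2*j)*(β*x) * (ξ ^ ((2*(t:ℤ)) - 2*(j:ℤ) - 1))^l)
        = (ξ ^ (2*t*l) * ((1 - β^2) + β * (x⁻¹ * ξ^l - x * (ξ^l)⁻¹))) * w^j := by
      intro j _
      rw [e2 j, e3 j, e1 j, hpow, hpow, hpow]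
      have h3 : (((ξ^l)^2)⁻¹ : ℂ)^j = ((ξ^(2*j*l)) : ℂ)⁻¹ := by
        rw [inv_pow, ← pow_mul, ← pow_mul]
        congr 1
        ring
      rw [hw, mul_pow, h3]
      have h1 : ξ^((2*t+1)*l) = ξ^(2*t*l) * ξ^l := by rw [← pow_add, add_mul, one_mul]
      have h2 : ξ^((2*j+1)*l) = ξ^(2*j*l) * ξ^l := by rw [← pow_add, add_mul, one_mul]
      rw [h1, h2]
      have n1 : (ξ:ℂ)^(2*j*l) ≠ 0 := pow_ne_zero _ hξ0
      field_simp
      ring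
    rw [Finset.sum_congr rfl expand, ← Finset.mul_sum]
    linear_combination (-(ξ ^ (2*t*l) * ((1 - β^2) + β * (x⁻¹ * ξ^l - x * (ξ^l)⁻¹)))) * hgeom
  rw [Finset.sum_congr rfl key, ← Finset.sum_div, Finset.sum_comm]
  -- evaluate the inner sums over l
  have inner : ∀ j ∈ Finset.range d,
      (∑ l ∈ Finset.range d,
          (x^(2*j)*(1-β^2) * (ξ ^ ((2*(t:ℤ)) - 2*(j:ℤ)))^l
            + x^(2*j)*(β*x⁻¹) * (ξ ^ ((2*(t:ℤ)) - 2*(j:ℤ) + 1))^l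
            - x^(2*j)*(β*x) * (ξ ^ ((2*(t:ℤ)) - 2*(j:ℤ) - 1))^l))
      = x^(2*j)*(1-β^2) * (if (d:ℤ) ∣ ((2*(t:ℤ)) - 2*(j:ℤ)) then (d:ℂ) else 0)
        + x^(2*j)*(β*x⁻¹) * (if (d:ℤ) ∣ ((2*(t:ℤ)) - 2*(j:ℤ) + 1) then (d:ℂ) else 0)
        - x^(2*j)*(β*x) * (if (d:ℤ) ∣ ((2*(t:ℤ)) - 2*(j:ℤ) - 1) then (d:ℂ) else 0) := by
    intro j _
    rw [Finset.sum_sub_distrib, Finset.sum_add_distrib, ← Finset.mul_sum, ← Finset.mul_sum,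
      ← Finset.mul_sum, hGa, hGa, hGa]
  rw [Finset.sum_congr rfl inner, Finset.sum_sub_distrib, Finset.sum_add_distrib]
  -- the first sum: only j = t survives
  have hA : (∑ j ∈ Finset.range d,
      x^(2*j)*(1-β^2) * (if (d:ℤ) ∣ ((2*(t:ℤ)) - 2*(j:ℤ)) then (d:ℂ) else 0))
      = x^(2*t)*(1-β^2) * (d:ℂ) := by
    refine aux_sum_ite d (fun j => x^(2*j)*(1-β^2)) (fun j => (2*(t:ℤ)) - 2*(j:ℤ)) t
      (by omega) (fun j hj => ?_) (d:ℂ)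
    rw [hdZ, aux_dvd m _ (by push_cast [hd] at hj ⊢; omega) (by push_cast [hd] at hj ⊢; omega)]
    push_cast [hd] at hj ⊢
    omega
  rw [hA]
  rcases Nat.lt_trichotomy t m with hc | hc | hc
  · -- t < m : second sum j₀ = t+m+1, third sum j₀ = t+m
    have hB : (∑ j ∈ Finset.range d,
        x^(2*j)*(β*x⁻¹) * (if (d:ℤ) ∣ ((2*(t:ℤ)) - 2*(j:ℤ) + 1) then (d:ℂ) else 0))
        = x^(2*(t+m+1))*(β*x⁻¹) * (d:ℂ) := by
      refine aux_sum_ite d (fun j => x^(2*j)*(β*x⁻¹)) (fun j => (2*(t:ℤ)) - 2*(j:ℤ) + 1)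
        (t+m+1) (by omega) (fun j hj => ?_) (d:ℂ)
      rw [hdZ, aux_dvd m _ (by push_cast [hd] at hj ⊢; omega) (by push_cast [hd] at hj ⊢; omega)]
      push_cast [hd] at hj ⊢
      omega
    have hC : (∑ j ∈ Finset.range d,
        x^(2*j)*(β*x) * (if (d:ℤ) ∣ ((2*(t:ℤ)) - 2*(j:ℤ) - 1) then (d:ℂ) else 0))
        = x^(2*(t+m))*(β*x) * (d:ℂ) := by
      refine aux_sum_ite d (fun j => x^(2*j)*(β*x)) (fun j => (2*(t:ℤ)) - 2*(j:ℤ) - 1)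
        (t+m) (by omega) (fun j hj => ?_) (d:ℂ)
      rw [hdZ, aux_dvd m _ (by push_cast [hd] at hj ⊢; omega) (by push_cast [hd] at hj ⊢; omega)]
      push_cast [hd] at hj ⊢
      omega
    rw [hB, hC, if_neg (by omega)]
    field_simp
    ring
  · -- t = m
    subst hc
    have hB : (∑ j ∈ Finset.range d,
        x^(2*j)*(β*x⁻¹) * (if (d:ℤ) ∣ ((2*(t:ℤ)) - 2*(j:ℤ) + 1) then (d:ℂ) else 0))
        = x^(2*0)*(β*x⁻¹) * (d:ℂ) := by
      refine aux_sum_ite d (fun j => x^(2*j)*(β*x⁻¹)) (fun j => (2*(t:ℤ)) - 2*(j:ℤ) + 1)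
        0 (by omega) (fun j hj => ?_) (d:ℂ)
      rw [hdZ, aux_dvd t _ (by push_cast [hd] at hj ⊢; omega) (by push_cast [hd] at hj ⊢; omega)]
      push_cast [hd] at hj ⊢
      omega
    have hC : (∑ j ∈ Finset.range d,
        x^(2*j)*(β*x) * (if (d:ℤ) ∣ ((2*(t:ℤ)) - 2*(j:ℤ) - 1) then (d:ℂ) else 0))
        = x^(2*(2*t))*(β*x) * (d:ℂ) := by
      refine aux_sum_ite d (fun j => x^(2*j)*(β*x)) (fun j => (2*(t:ℤ)) - 2*(j:ℤ) - 1)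
        (2*t) (by omega) (fun j hj => ?_) (d:ℂ)
      rw [hdZ, aux_dvd t _ (by push_cast [hd] at hj ⊢; omega) (by push_cast [hd] at hj ⊢; omega)]
      push_cast [hd] at hj ⊢
      omega
    rw [hB, hC, if_pos (by omega)]
    have hsub : d - 1 = 2*t := by omega
    rw [hsub]
    field_simp
    ring
  · -- t > m : write t = m+1+s
    obtain ⟨s, hs⟩ : ∃ s, t = m+1+s := ⟨t-m-1, by omega⟩
    subst hs
    have hB : (∑ j ∈ Finset.range d,
        x^(2*j)*(β*x⁻¹) * (if (d:ℤ) ∣ ((2*((m+1+s : ℕ):ℤ)) - 2*(j:ℤ) + 1) then (d:ℂ) else 0))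
        = x^(2*(s+1))*(β*x⁻¹) * (d:ℂ) := by
      refine aux_sum_ite d (fun j => x^(2*j)*(β*x⁻¹)) (fun j => (2*((m+1+s : ℕ):ℤ)) - 2*(j:ℤ) + 1)
        (s+1) (by omega) (fun j hj => ?_) (d:ℂ)
      rw [hdZ, aux_dvd m _ (by push_cast [hd] at hj ⊢; omega) (by push_cast [hd] at hj ⊢; omega)]
      push_cast [hd] at hj ⊢
      omega
    have hC : (∑ j ∈ Finset.range d,
        x^(2*j)*(β*x) * (if (d:ℤ) ∣ ((2*((m+1+s : ℕ):ℤ)) - 2*(j:ℤ) - 1) then (d:ℂ) else 0))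
        = x^(2*s)*(β*x) * (d:ℂ) := by
      refine aux_sum_ite d (fun j => x^(2*j)*(β*x)) (fun j => (2*((m+1+s : ℕ):ℤ)) - 2*(j:ℤ) - 1)
        s (by omega) (fun j hj => ?_) (d:ℂ)
      rw [hdZ, aux_dvd m _ (by push_cast [hd] at hj ⊢; omega) (by push_cast [hd] at hj ⊢; omega)]
      push_cast [hd] at hj ⊢
      omega
    rw [hB, hC, if_neg (by omega)]
    field_simp
    ring
end

section
/- Let A be a finite commutative group, b : A × A → ℂˣ a nondegenerate alternating bilinear pairing, and (J, K) a Lagrangian decomposition of (A, b). Then for all functions F, G : A → ℂ: (1/|K|)·Σ_{y ∈ K} Σ_{k ∈ K} [ (1/|J|)·Σ_{j ∈ J} F(y⁻¹·k·j)·b(j, k) ] · [ (1/|J|)·Σ_{h ∈ J} G(y·k⁻¹·h)·b(h, k) ] = (1/|A|)·Σ_{x ∈ A} F(x⁻¹)·G(x). -/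
open scoped BigOperators

section Aux

variable {A : Type*} [CommGroup A] {b : A → A → ℂˣ}

lemma aux_b_one_left (hbil₁ : ∀ x y z : A, b (x * y) z = b x z * b y z) (y : A) :
    b 1 y = 1 := by
  have h := hbil₁ 1 1 y
  rw [one_mul] at h
  have h2 : b 1 y * 1 = b 1 y * b 1 y := by rw [mul_one]; exact h
  exact (mul_left_cancel h2).symm

lemma aux_b_one_right (hbil₂ : ∀ x y z : A, b x (y * z) = b x y * b x z) (x : A) :
    b x 1 = 1 := by
  have h := hbil₂ x 1 1
  rw [one_mul] at h
  have h2 : b x 1 * 1 = b x 1 * b x 1 := by rw [mul_one]; exact h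
  exact (mul_left_cancel h2).symm

lemma aux_b_inv_left (hbil₁ : ∀ x y z : A, b (x * y) z = b x z * b y z) (x y : A) :
    b x⁻¹ y = (b x y)⁻¹ := by
  have h := hbil₁ x x⁻¹ y
  rw [mul_inv_cancel, aux_b_one_left hbil₁] at h
  exact inv_eq_of_mul_eq_one_right h.symm |>.symm

lemma aux_skew (hbil₁ : ∀ x y z : A, b (x * y) z = b x z * b y z)
    (hbil₂ : ∀ x y z : A, b x (y * z) = b x y * b x z)
    (halt : ∀ x : A, b x x = 1) (x y : A) : b x y * b y x = 1 := by
  have h := halt (x * y)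
  rw [hbil₁, hbil₂, hbil₂, halt x, halt y, one_mul, mul_one] at h
  exact h

lemma char_sum {Γ : Type*} [CommGroup Γ] [Fintype Γ] (χ : Γ → ℂˣ)
    (hmul : ∀ a c : Γ, χ (a * c) = χ a * χ c) :
    (∑ g : Γ, ((χ g : ℂˣ) : ℂ)) =
      if ∀ g : Γ, χ g = 1 then (Fintype.card Γ : ℂ) else 0 := by
  by_cases h : ∀ g : Γ, χ g = 1
  · simp [h]
  · rw [if_neg h]
    push_neg at h
    obtain ⟨g₀, hg₀⟩ := h
    set S := ∑ g : Γ, ((χ g : ℂˣ) : ℂ) with hS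
    have hstep : S = S * ((χ g₀ : ℂˣ) : ℂ) := by
      calc S = ∑ g : Γ, ((χ ((Equiv.mulRight g₀) g) : ℂˣ) : ℂ) :=
            (Equiv.sum_comp (Equiv.mulRight g₀) (fun g : Γ => ((χ g : ℂˣ) : ℂ))).symm
        _ = ∑ g : Γ, ((χ g : ℂˣ) : ℂ) * ((χ g₀ : ℂˣ) : ℂ) := by
            refine Finset.sum_congr rfl fun g _ => ?_
            simp [Equiv.coe_mulRight, hmul]
        _ = S * ((χ g₀ : ℂˣ) : ℂ) := (Finset.sum_mul _ _ _).symm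
    have hne : ((χ g₀ : ℂˣ) : ℂ) - 1 ≠ 0 := by
      rw [sub_ne_zero]
      exact fun hc => hg₀ (Units.ext (by simpa using hc))
    have hz : S * (((χ g₀ : ℂˣ) : ℂ) - 1) = 0 := by
      rw [mul_sub, ← hstep, mul_one, sub_self]
    exact (mul_eq_zero.mp hz).resolve_right hne

end Aux

/-- The combinatorial core of Theorem 6.1 (the averaging formula for the Plancherel
measure): for a Lagrangian decomposition `(J, K)` of `(A, b)` and arbitrary functions
`F, G : A → ℂ`,
`|K|⁻¹ Σ_{y∈K} Σ_{k∈K} (|J|⁻¹ Σ_{j∈J} F(y⁻¹kj)·b(j,k)) · (|J|⁻¹ Σ_{h∈J} G(yk⁻¹h)·b(h,k))`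
equals `|A|⁻¹ Σ_{x∈A} F(x⁻¹)·G(x)`. -/
theorem lagrangian_average_identity
    {A : Type*} [CommGroup A] [Fintype A] (b : A → A → ℂˣ)
    (hbil₁ : ∀ x y z : A, b (x * y) z = b x z * b y z)
    (hbil₂ : ∀ x y z : A, b x (y * z) = b x y * b x z)
    (halt : ∀ x : A, b x x = 1)
    (hnd : ∀ x : A, (∀ y : A, b x y = 1) → x = 1)
    (J K : Subgroup A) [Fintype ↥J] [Fintype ↥K]
    (hJK : IsLagrangianDecomp b J K) (F G : A → ℂ) :
    (Nat.card ↥K : ℂ)⁻¹ * ∑ y : K, ∑ k : K,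
        ((Nat.card ↥J : ℂ)⁻¹ *
            ∑ j : J, F ((y : A)⁻¹ * (k : A) * (j : A)) * ((b (j : A) (k : A) : ℂˣ) : ℂ)) *
        ((Nat.card ↥J : ℂ)⁻¹ *
            ∑ h : J, G ((y : A) * (k : A)⁻¹ * (h : A)) * ((b (h : A) (k : A) : ℂˣ) : ℂ))
      = (Nat.card A : ℂ)⁻¹ * ∑ x : A, F x⁻¹ * G x := by
  classical
  obtain ⟨hJ, hK, hmeet, hgen, hinj, hsurj⟩ := hJK
  have hone : ∀ y : A, b 1 y = 1 := aux_b_one_left hbil₁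
  have honer : ∀ x : A, b x 1 = 1 := aux_b_one_right hbil₂
  have hskew : ∀ x y : A, b x y * b y x = 1 := aux_skew hbil₁ hbil₂ halt
  -- orthogonality over K
  have horthoK : ∀ m : A, m ∈ J →
      (∑ k : K, ((b m (k : A) : ℂˣ) : ℂ)) =
        if m = 1 then (Fintype.card K : ℂ) else 0 := by
    intro m hm
    have hmul : ∀ a c : K, b m ((a * c : K) : A) = b m (a : A) * b m (c : A) := by
      intro a c
      push_cast
      rw [hbil₂]
    have hcond : (∀ k : K, b m (k : A) = 1) ↔ m = 1 := by
      constructor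
      · intro h
        apply hnd
        intro a
        obtain ⟨j, hj, k, hk, rfl⟩ := hgen a
        rw [hbil₂, (hJ m).mp hm j hj, h ⟨k, hk⟩, one_mul]
      · rintro rfl k
        exact hone _
    rw [char_sum (fun k : K => b m (k : A)) hmul, if_congr hcond rfl rfl]
  -- orthogonality over J
  have horthoJ : ∀ c : A, c ∈ K →
      (∑ j : J, ((b (j : A) c : ℂˣ) : ℂ)) =
        if c = 1 then (Fintype.card J : ℂ) else 0 := by
    intro c hc
    have hmul : ∀ a d : J, b ((a * d : J) : A) c = b (a : A) c * b (d : A) c := by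
      intro a d
      push_cast
      rw [hbil₁]
    have hcond : (∀ j : J, b (j : A) c = 1) ↔ c = 1 := by
      constructor
      · intro h
        have hcJ : c ∈ J := by
          rw [hJ c]
          intro j hj
          have hs := hskew c j
          rw [h ⟨j, hj⟩, mul_one] at hs
          exact hs
        have : c ∈ J ⊓ K := ⟨hcJ, hc⟩
        rw [hmeet] at this
        exact this
      · rintro rfl j
        exact honer _
    rw [char_sum (fun j : J => b (j : A) c) hmul, if_congr hcond rfl rfl]
  -- |J| = |K|
  have hJ0 : (Fintype.card J : ℂ) ≠ 0 := Nat.cast_ne_zero.mpr Fintype.card_ne_zero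
  have hK0 : (Fintype.card K : ℂ) ≠ 0 := Nat.cast_ne_zero.mpr Fintype.card_ne_zero
  have hcardJK : (Fintype.card J : ℂ) = (Fintype.card K : ℂ) := by
    have h1 : ∑ j : J, ∑ k : K, ((b (j : A) (k : A) : ℂˣ) : ℂ) = (Fintype.card K : ℂ) := by
      rw [Finset.sum_congr rfl fun (j : J) _ => horthoK (j : A) j.2]
      simp only [OneMemClass.coe_eq_one]
      rw [Finset.sum_ite_eq' Finset.univ (1 : J) (fun _ => (Fintype.card K : ℂ))]
      simp
    have h2 : ∑ k : K, ∑ j : J, ((b (j : A) (k : A) : ℂˣ) : ℂ) = (Fintype.card J : ℂ) := by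
      rw [Finset.sum_congr rfl fun (k : K) _ => horthoJ (k : A) k.2]
      simp only [OneMemClass.coe_eq_one]
      rw [Finset.sum_ite_eq' Finset.univ (1 : K) (fun _ => (Fintype.card J : ℂ))]
      simp
    rw [← h2, ← h1, Finset.sum_comm]
  -- the bijection J × K ≃ A
  have hbij : Function.Bijective (fun p : J × K => (p.1 : A) * (p.2 : A)) := by
    constructor
    · rintro ⟨j₁, k₁⟩ ⟨j₂, k₂⟩ h
      simp only at h
      have hx : ((j₂ : A))⁻¹ * (j₁ : A) = (k₂ : A) * ((k₁ : A))⁻¹ := by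
        calc ((j₂ : A))⁻¹ * (j₁ : A)
            = ((j₂ : A))⁻¹ * ((j₁ : A) * (k₁ : A)) * ((k₁ : A))⁻¹ := by group
          _ = ((j₂ : A))⁻¹ * ((j₂ : A) * (k₂ : A)) * ((k₁ : A))⁻¹ := by rw [h]
          _ = (k₂ : A) * ((k₁ : A))⁻¹ := by group
      have hwJ : ((j₂ : A))⁻¹ * (j₁ : A) ∈ J := mul_mem (inv_mem j₂.2) j₁.2
      have hwK : ((j₂ : A))⁻¹ * (j₁ : A) ∈ K := hx ▸ mul_mem k₂.2 (inv_mem k₁.2)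
      have hw1 : ((j₂ : A))⁻¹ * (j₁ : A) = 1 := by
        have hmem : ((j₂ : A))⁻¹ * (j₁ : A) ∈ J ⊓ K := ⟨hwJ, hwK⟩
        rwa [hmeet, Subgroup.mem_bot] at hmem
      have hj2 : (j₂ : A) = (j₁ : A) := inv_mul_eq_one.mp hw1
      have hk2 : (k₂ : A) = (k₁ : A) := mul_inv_eq_one.mp (hx.symm.trans hw1)
      exact Prod.ext (Subtype.ext hj2.symm) (Subtype.ext hk2.symm)
    · intro a
      obtain ⟨j, hj, k, hk, rfl⟩ := hgen a
      exact ⟨(⟨j, hj⟩, ⟨k, hk⟩), rfl⟩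
  set e : J × K ≃ A := Equiv.ofBijective _ hbij with he
  have hcardA : (Fintype.card A : ℂ) = (Fintype.card J : ℂ) * (Fintype.card J : ℂ) := by
    rw [← Fintype.card_congr e, Fintype.card_prod]
    push_cast
    rw [hcardJK]
  -- sum over A via the inversion
  have hsum_x : ∑ x : A, F x * G x⁻¹ = ∑ x : A, F x⁻¹ * G x := by
    calc ∑ x : A, F x * G x⁻¹
        = ∑ x : A, F ((Equiv.inv A) x) * G (((Equiv.inv A) x)⁻¹) :=
          (Equiv.sum_comp (Equiv.inv A) (fun x : A => F x * G x⁻¹)).symm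
      _ = ∑ x : A, F x⁻¹ * G x := by
          refine Finset.sum_congr rfl fun x _ => ?_
          simp
  -- sum over A via the product decomposition
  have hprod : ∑ w : K, ∑ j : J, F ((w : A) * (j : A)) * G (((w : A) * (j : A))⁻¹)
      = ∑ x : A, F x * G x⁻¹ := by
    conv_rhs => rw [← Equiv.sum_comp e (fun x : A => F x * G x⁻¹)]
    conv_rhs => rw [Fintype.sum_prod_type]
    conv_rhs => rw [Finset.sum_comm]
    refine Finset.sum_congr rfl fun w _ => Finset.sum_congr rfl fun j _ => ?_
    have : e (j, w) = (j : A) * (w : A) := rfl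
    rw [this, mul_comm ((j : A)) ((w : A))]
  -- the core manipulation of the inner double sum
  have hcore : ∀ y k : K,
      (∑ j : J, F ((y : A)⁻¹ * (k : A) * (j : A)) * ((b (j : A) (k : A) : ℂˣ) : ℂ)) *
        (∑ h : J, G ((y : A) * (k : A)⁻¹ * (h : A)) * ((b (h : A) (k : A) : ℂˣ) : ℂ))
      = ∑ j : J, ∑ m : J,
          F ((y : A)⁻¹ * (k : A) * (j : A)) *
            G (((y : A)⁻¹ * (k : A) * (j : A))⁻¹ * (m : A)) *
            ((b (m : A) (k : A) : ℂˣ) : ℂ) := by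
    intro y k
    rw [Finset.sum_mul_sum]
    refine Finset.sum_congr rfl fun j _ => ?_
    rw [← Equiv.sum_comp (Equiv.mulLeft (j⁻¹ : J))
      (fun h : J => F ((y : A)⁻¹ * (k : A) * (j : A)) * ((b (j : A) (k : A) : ℂˣ) : ℂ) *
        (G ((y : A) * (k : A)⁻¹ * (h : A)) * ((b (h : A) (k : A) : ℂˣ) : ℂ)))]
    refine Finset.sum_congr rfl fun m _ => ?_
    simp only [Equiv.coe_mulLeft]
    have hc : ((j⁻¹ * m : J) : A) = ((j : A))⁻¹ * (m : A) := rfl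
    rw [hc]
    have harg : (y : A) * (k : A)⁻¹ * (((j : A))⁻¹ * (m : A))
        = ((y : A)⁻¹ * (k : A) * (j : A))⁻¹ * (m : A) := by
      simp [mul_inv_rev, mul_comm, mul_left_comm, mul_assoc]
    rw [harg, hbil₁, aux_b_inv_left hbil₁]
    have hu : ((b (j : A) (k : A) : ℂˣ) : ℂ) ≠ 0 := Units.ne_zero _
    push_cast
    field_simp
  -- the main quadruple-sum computation
  have hmain : (∑ y : K, ∑ k : K,
      (∑ j : J, F ((y : A)⁻¹ * (k : A) * (j : A)) * ((b (j : A) (k : A) : ℂˣ) : ℂ)) *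
        (∑ h : J, G ((y : A) * (k : A)⁻¹ * (h : A)) * ((b (h : A) (k : A) : ℂˣ) : ℂ)))
      = (Fintype.card K : ℂ) * ∑ x : A, F x⁻¹ * G x := by
    calc (∑ y : K, ∑ k : K,
        (∑ j : J, F ((y : A)⁻¹ * (k : A) * (j : A)) * ((b (j : A) (k : A) : ℂˣ) : ℂ)) *
          (∑ h : J, G ((y : A) * (k : A)⁻¹ * (h : A)) * ((b (h : A) (k : A) : ℂˣ) : ℂ)))
        = ∑ y : K, ∑ k : K, ∑ j : J, ∑ m : J,
            F ((y : A)⁻¹ * (k : A) * (j : A)) *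
              G (((y : A)⁻¹ * (k : A) * (j : A))⁻¹ * (m : A)) *
              ((b (m : A) (k : A) : ℂˣ) : ℂ) :=
          Finset.sum_congr rfl fun y _ => Finset.sum_congr rfl fun k _ => hcore y k
      _ = ∑ k : K, ∑ y : K, ∑ j : J, ∑ m : J,
            F ((y : A)⁻¹ * (k : A) * (j : A)) *
              G (((y : A)⁻¹ * (k : A) * (j : A))⁻¹ * (m : A)) *
              ((b (m : A) (k : A) : ℂˣ) : ℂ) := Finset.sum_comm
      _ = ∑ k : K, ∑ w : K, ∑ j : J, ∑ m : J,
            F ((w : A) * (j : A)) * G (((w : A) * (j : A))⁻¹ * (m : A)) *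
              ((b (m : A) (k : A) : ℂˣ) : ℂ) := by
          refine Finset.sum_congr rfl fun k _ => ?_
          rw [← Equiv.sum_comp ((Equiv.inv K).trans (Equiv.mulLeft k))
            (fun y : K => ∑ j : J, ∑ m : J,
              F ((y : A)⁻¹ * (k : A) * (j : A)) *
                G (((y : A)⁻¹ * (k : A) * (j : A))⁻¹ * (m : A)) *
                ((b (m : A) (k : A) : ℂˣ) : ℂ))]
          refine Finset.sum_congr rfl fun w _ => ?_
          have harg : (((k * w⁻¹ : K) : A))⁻¹ * (k : A) = (w : A) := by
            push_cast
            simp [mul_inv_rev]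
          simp only [Equiv.trans_apply, Equiv.inv_apply, Equiv.coe_mulLeft, harg]
      _ = ∑ w : K, ∑ j : J, ∑ m : J,
            (F ((w : A) * (j : A)) * G (((w : A) * (j : A))⁻¹ * (m : A))) *
              ∑ k : K, ((b (m : A) (k : A) : ℂˣ) : ℂ) := by
          conv_lhs => rw [Finset.sum_comm]
          refine Finset.sum_congr rfl fun w _ => ?_
          conv_lhs => rw [Finset.sum_comm]
          refine Finset.sum_congr rfl fun j _ => ?_
          conv_lhs => rw [Finset.sum_comm]
          refine Finset.sum_congr rfl fun m _ => ?_
          rw [← Finset.mul_sum]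
      _ = ∑ w : K, ∑ j : J,
            F ((w : A) * (j : A)) * G (((w : A) * (j : A))⁻¹) * (Fintype.card K : ℂ) := by
          refine Finset.sum_congr rfl fun w _ => Finset.sum_congr rfl fun j _ => ?_
          calc ∑ m : J, (F ((w : A) * (j : A)) * G (((w : A) * (j : A))⁻¹ * (m : A))) *
                  ∑ k : K, ((b (m : A) (k : A) : ℂˣ) : ℂ)
              = ∑ m : J, (F ((w : A) * (j : A)) * G (((w : A) * (j : A))⁻¹ * (m : A))) *
                  (if (m : A) = 1 then (Fintype.card K : ℂ) else 0) :=
                Finset.sum_congr rfl fun m _ => by rw [horthoK (m : A) m.2]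
            _ = F ((w : A) * (j : A)) * G (((w : A) * (j : A))⁻¹) * (Fintype.card K : ℂ) := by
                simp only [OneMemClass.coe_eq_one, mul_ite, mul_zero]
                rw [Finset.sum_ite_eq' Finset.univ (1 : J)
                  (fun m : J => F ((w : A) * (j : A)) *
                    G (((w : A) * (j : A))⁻¹ * (m : A)) * (Fintype.card K : ℂ))]
                simp [mul_assoc]
      _ = (Fintype.card K : ℂ) *
            ∑ w : K, ∑ j : J, F ((w : A) * (j : A)) * G (((w : A) * (j : A))⁻¹) := by
          rw [Finset.mul_sum]
          refine Finset.sum_congr rfl fun w _ => ?_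
          rw [Finset.mul_sum]
          refine Finset.sum_congr rfl fun j _ => ?_
          ring
      _ = (Fintype.card K : ℂ) * ∑ x : A, F x * G x⁻¹ := by rw [hprod]
      _ = (Fintype.card K : ℂ) * ∑ x : A, F x⁻¹ * G x := by rw [hsum_x]
  -- pulling out the constants
  have hpull : (∑ y : K, ∑ k : K,
      ((Fintype.card ↥J : ℂ)⁻¹ *
          ∑ j : J, F ((y : A)⁻¹ * (k : A) * (j : A)) * ((b (j : A) (k : A) : ℂˣ) : ℂ)) *
        ((Fintype.card ↥J : ℂ)⁻¹ *
          ∑ h : J, G ((y : A) * (k : A)⁻¹ * (h : A)) * ((b (h : A) (k : A) : ℂˣ) : ℂ)))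
      = (Fintype.card ↥J : ℂ)⁻¹ * (Fintype.card ↥J : ℂ)⁻¹ * (∑ y : K, ∑ k : K,
          (∑ j : J, F ((y : A)⁻¹ * (k : A) * (j : A)) * ((b (j : A) (k : A) : ℂˣ) : ℂ)) *
            (∑ h : J, G ((y : A) * (k : A)⁻¹ * (h : A)) * ((b (h : A) (k : A) : ℂˣ) : ℂ))) := by
    conv_rhs => rw [Finset.mul_sum]
    refine Finset.sum_congr rfl fun y _ => ?_
    conv_rhs => rw [Finset.mul_sum]
    refine Finset.sum_congr rfl fun k _ => ?_
    ring
  simp only [Nat.card_eq_fintype_card]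
  rw [hpull, hmain, hcardA]
  field_simp
end

section
/- Let R be a commutative local ring with maximal ideal P, and let p be a prime number with p ∈ P. Let n be a positive integer coprime to p, let χ : Rˣ → ℂˣ be a group homomorphism, and let a, b be integers with 1 ≤ a ≤ b. Assume that χ(u)ⁿ = 1 for every u ∈ Rˣ with u − 1 ∈ P^a, and that χ(u) = 1 for every u ∈ Rˣ with u − 1 ∈ P^b. Then χ(u) = 1 for every u ∈ Rˣ with u − 1 ∈ P^a. -/
lemma pow_prime_one_add_sub_one_mem {R : Type*} [CommRing R] {P : Ideal R}
    (p : ℕ) (hp : p.Prime) (hpP : (p : R) ∈ P) {a : ℕ} (ha : 1 ≤ a)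
    {x : R} (hx : x ∈ P ^ a) : (x + 1) ^ p - 1 ∈ P ^ (a + 1) := by
  have h := add_pow x 1 p
  simp only [one_pow, mul_one] at h
  rw [Finset.sum_range_succ'] at h
  simp only [pow_zero, Nat.choose_zero_right, Nat.cast_one, one_mul] at h
  rw [h, add_sub_cancel_right]
  apply Ideal.sum_mem
  intro k hk
  rcases lt_or_eq_of_le (Nat.succ_le_of_lt (Finset.mem_range.mp hk)) with hlt | heq
  · obtain ⟨m, hm⟩ := hp.dvd_choose_self (Nat.succ_ne_zero k) hlt
    rw [hm]
    push_cast
    rw [pow_succ]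
    exact Ideal.mul_mem_mul (Ideal.pow_mem_of_mem _ hx _ (Nat.succ_pos k))
      (Ideal.mul_mem_right _ _ hpP)
  · simp only [Nat.succ_eq_add_one] at heq
    rw [heq, Nat.choose_self, Nat.cast_one, mul_one]
    have : x ^ p ∈ P ^ (a * p) := by
      rw [pow_mul]; exact Ideal.pow_mem_pow hx p
    refine Ideal.pow_le_pow_right ?_ this
    calc a + 1 ≤ a + a := by omega
    _ ≤ a * p := by nlinarith [hp.two_le]



/-- The core of assertion (5) of Lemma 5.1: let `R` be a commutative local ring with
maximal ideal `P` containing a prime `p`, and `n` a positive integer coprime to `p`.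
If `χ : Rˣ → ℂˣ` is a group homomorphism such that `χⁿ` is trivial on the units
congruent to `1` mod `P^a` (with `1 ≤ a ≤ b`) and `χ` itself is trivial on the units
congruent to `1` mod `P^b`, then `χ` is trivial on the units congruent to `1` mod `P^a`. -/
theorem character_trivial_of_pow_trivial
    {R : Type*} [CommRing R] [IsLocalRing R]
    (p : ℕ) (hp : p.Prime) (hpP : (p : R) ∈ IsLocalRing.maximalIdeal R)
    (n : ℕ) (hn : 0 < n) (hnp : Nat.Coprime n p)
    (χ : Rˣ →* ℂˣ) (a b : ℕ) (ha : 1 ≤ a) (hab : a ≤ b)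
    (hχn : ∀ u : Rˣ, (u : R) - 1 ∈ IsLocalRing.maximalIdeal R ^ a → χ u ^ n = 1)
    (hχb : ∀ u : Rˣ, (u : R) - 1 ∈ IsLocalRing.maximalIdeal R ^ b → χ u = 1) :
    ∀ u : Rˣ, (u : R) - 1 ∈ IsLocalRing.maximalIdeal R ^ a → χ u = 1 := by
  intro u hu
  set P := IsLocalRing.maximalIdeal R
  have key : ∀ m : ℕ, ((u ^ p ^ m : Rˣ) : R) - 1 ∈ P ^ (a + m) := by
    intro m
    induction m with
    | zero => simpa using hu
    | succ m ih =>
      have h1 : 1 ≤ a + m := by omega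
      have := pow_prime_one_add_sub_one_mem p hp hpP h1
        (x := ((u ^ p ^ m : Rˣ) : R) - 1) ih
      rw [sub_add_cancel] at this
      have heq : (((u ^ p ^ (m + 1) : Rˣ) : R)) = ((u ^ p ^ m : Rˣ) : R) ^ p := by
        push_cast [pow_succ, pow_mul]; ring
      rw [heq]
      exact this
  have h2 : χ (u ^ p ^ (b - a)) = 1 := by
    apply hχb
    have := key (b - a)
    rwa [show a + (b - a) = b by omega] at this
  rw [map_pow] at h2
  have hd1 : orderOf (χ u) ∣ n := orderOf_dvd_of_pow_eq_one (hχn u hu)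
  have hd2 : orderOf (χ u) ∣ p ^ (b - a) := orderOf_dvd_of_pow_eq_one h2
  have : orderOf (χ u) = 1 := Nat.eq_one_of_dvd_coprimes (hnp.pow_right _) hd1 hd2
  exact orderOf_eq_one_iff.mp this
end
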